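/- arXiv:1602.04935 — 6 statements merged into one kernel-verified Lean document; each statement's English description precedes it below -/
import Mathlib

section
/- Let A be a nonempty closed subset of a Euclidean space E, let A' ⊆ E, let x̄ ∈ A, and let ε, δ > 0. Then A is (A',ε,δ)-regular at x̄ if and only if A is elementally subregular relative to A at x̄ for every pair (a,v) with a ∈ A ∩ B_δ(x̄) and v ∈ N^p_{A|A'}(a), with constant ε and neighborhood B_δ(x̄). Moreover, if A is (A',ε,δ)-regular at x̄, then for every nonzero v ∈ N^p_{A|A'}(x̄) the set A is elementally regular at x̄ for (x̄,v) with constant ε. -/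
open Metric Set Pointwise Filter ENNReal
open scoped RealInnerProductSpace

section Defs

variable {E : Type*} [NormedAddCommGroup E] [InnerProductSpace ℝ E] [FiniteDimensional ℝ E]

/-- The projector onto a set: `P_A(x) = {a ∈ A : ‖x − a‖ = d(x,A)}`. -/
def projSet (A : Set E) (x : E) : Set E := {a | a ∈ A ∧ ‖x - a‖ = Metric.infDist x A}

/-- The proximal normal cone `N^p_A(a) = {λ(x−a) : λ ≥ 0, a ∈ P_A(x)}`. -/
def proxNC (A : Set E) (a : E) : Set E :=
  {v | ∃ lam : ℝ, 0 ≤ lam ∧ ∃ x : E, a ∈ projSet A x ∧ v = lam • (x - a)}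

/-- The restricted (`A'`-)proximal normal cone
`N^p_{A|A'}(a) = {λ(x−a) : λ ≥ 0, x ∈ A', a ∈ P_A(x)}`. -/
def proxNCRes (A A' : Set E) (a : E) : Set E :=
  {v | ∃ lam : ℝ, 0 ≤ lam ∧ ∃ x ∈ A', a ∈ projSet A x ∧ v = lam • (x - a)}

/-- The limiting normal cone: limits of proximal normals at points of `A` converging to `a`. -/
def limNC (A : Set E) (a : E) : Set E :=
  {v | ∃ x w : ℕ → E, (∀ k, x k ∈ A) ∧ (∀ k, w k ∈ proxNC A (x k)) ∧
    Filter.Tendsto x Filter.atTop (nhds a) ∧ Filter.Tendsto w Filter.atTop (nhds v)}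

/-- The Fréchet normal cone (via the standard ε-δ reformulation of `limsup ≤ 0`). -/
def frechetNC (A : Set E) (a : E) : Set E :=
  {v | ∀ ε > 0, ∃ δ > 0, ∀ x ∈ A, ‖x - a‖ < δ → ⟪v, x - a⟫ ≤ ε * ‖x - a‖}

/-- `A` is elementally subregular of order `σ` relative to `B` for `(a,v)` with constant `ε`
and neighborhood `U` (of the reference point). -/
def ElemSubregOn (A B : Set E) (a v : E) (ε σ : ℝ) (U : Set E) : Prop :=
  ∀ b ∈ B ∩ U, ∀ bA ∈ projSet A b,
    ⟪v - (b - bA), bA - a⟫ ≤ ε * ‖v - (b - bA)‖ ^ (1 + σ) * ‖bA - a‖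

/-- `A` is `σ`-Hölder regular relative to `B` (first argument is the projected set) at points of
`B ∩ W` with constant `c` and neighborhood `W`:
`B_{(1+c)‖b−b_A‖}(b) ∩ A ∩ {x ∈ P_B⁻¹(b) : ⟨b−b_A, x−b_A⟩ > √c ‖b−b_A‖^{σ+1} ‖x−b_A‖} = ∅`. -/
def HoelderRegOn (A B : Set E) (σ c : ℝ) (W : Set E) : Prop :=
  ∀ b ∈ B ∩ W, ∀ bA ∈ projSet A b ∩ W,
    ∀ x ∈ Metric.ball b ((1 + c) * ‖b - bA‖) ∩ A, b ∈ projSet B x →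
      ⟪b - bA, x - bA⟫ ≤ Real.sqrt c * ‖b - bA‖ ^ (σ + 1) * ‖x - bA‖

/-- `A` is super-regular at `x̄`. -/
def SuperRegular (A : Set E) (xb : E) : Prop :=
  ∀ ε > 0, ∃ δ > 0, ∀ x ∈ A ∩ Metric.ball xb δ, ∀ z ∈ Metric.ball xb δ, ∀ zA ∈ projSet A z,
    ⟪z - zA, x - zA⟫ ≤ ε * ‖z - zA‖ * ‖x - zA‖

/-- Subtransversality with constants `α`, `δ`:
`(A + (αρ)𝔹) ∩ (B + (αρ)𝔹) ∩ B_δ(x̄) ⊆ (A ∩ B) + ρ𝔹` for all `ρ ∈ (0,δ)`. -/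
def SubtransversalWith (A B : Set E) (xb : E) (α δ : ℝ) : Prop :=
  ∀ ρ ∈ Set.Ioo (0 : ℝ) δ,
    (A + Metric.ball 0 (α * ρ)) ∩ (B + Metric.ball 0 (α * ρ)) ∩ Metric.ball xb δ ⊆
      (A ∩ B) + Metric.ball 0 ρ

/-- The collection `{A,B}` is subtransversal at `x̄`. -/
def Subtransversal (A B : Set E) (xb : E) : Prop :=
  ∃ α > 0, ∃ δ > 0, SubtransversalWith A B xb α δ

/-- `sr[A,B](x̄)`: the (possibly infinite) supremum of admissible subtransversality constants. -/
noncomputable def srColl (A B : Set E) (xb : E) : ℝ≥0∞ :=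
  ⨆ α ∈ {α : ℝ | 0 < α ∧ ∃ δ > 0, SubtransversalWith A B xb α δ}, ENNReal.ofReal α

/-- Transversality with constants `α`, `δ`:
`(A − a − x₁) ∩ (B − b − x₂) ∩ (ρ𝔹) ≠ ∅` for all `ρ ∈ (0,δ)`, `a ∈ A ∩ B_δ(x̄)`,
`b ∈ B ∩ B_δ(x̄)` and `max{‖x₁‖,‖x₂‖} < αρ`. -/
def TransversalWith (A B : Set E) (xb : E) (α δ : ℝ) : Prop :=
  ∀ ρ ∈ Set.Ioo (0 : ℝ) δ, ∀ a ∈ A ∩ Metric.ball xb δ, ∀ b ∈ B ∩ Metric.ball xb δ,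
    ∀ x₁ x₂ : E, max ‖x₁‖ ‖x₂‖ < α * ρ →
      (((fun z => z - a - x₁) '' A) ∩ ((fun z => z - b - x₂) '' B) ∩
        Metric.ball 0 ρ).Nonempty

/-- The collection `{A,B}` is transversal at `x̄`. -/
def Transversal (A B : Set E) (xb : E) : Prop :=
  ∃ α > 0, ∃ δ > 0, TransversalWith A B xb α δ

/-- `rg[A,B](x̄)`: the (possibly infinite) supremum of admissible transversality constants. -/
noncomputable def rgColl (A B : Set E) (xb : E) : ℝ≥0∞ :=
  ⨆ α ∈ {α : ℝ | 0 < α ∧ ∃ δ > 0, TransversalWith A B xb α δ}, ENNReal.ofReal α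

end Defs

section Maps

variable {X Y : Type*} [PseudoMetricSpace X] [PseudoMetricSpace Y]

/-- Metric subregularity of the set-valued mapping `F` at `x̄` for `ȳ` with constant `α`
(distances to possibly empty sets are taken in `ℝ≥0∞`, so that `d(x,∅) = ∞`). -/
def MetrSubregWith (F : X → Set Y) (xb : X) (yb : Y) (α : ℝ) : Prop :=
  ∃ δ > 0, ∀ x ∈ Metric.ball xb δ,
    ENNReal.ofReal α * EMetric.infEdist x {x' | yb ∈ F x'} ≤ EMetric.infEdist yb (F x)

/-- `sr[F](x̄|ȳ)`: the supremum of admissible metric subregularity constants. -/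
noncomputable def srMap (F : X → Set Y) (xb : X) (yb : Y) : ℝ≥0∞ :=
  ⨆ α ∈ {α : ℝ | 0 < α ∧ MetrSubregWith F xb yb α}, ENNReal.ofReal α

/-- Metric regularity of the set-valued mapping `F` at `x̄` for `ȳ` with constant `α`. -/
def MetrRegWith (F : X → Set Y) (xb : X) (yb : Y) (α : ℝ) : Prop :=
  ∃ δ > 0, ∀ x ∈ Metric.ball xb δ, ∀ y ∈ Metric.ball yb δ,
    ENNReal.ofReal α * EMetric.infEdist x {x' | y ∈ F x'} ≤ EMetric.infEdist y (F x)

/-- `r[F](x̄|ȳ)`: the supremum of admissible metric regularity constants. -/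
noncomputable def rMap (F : X → Set Y) (xb : X) (yb : Y) : ℝ≥0∞ :=
  ⨆ α ∈ {α : ℝ | 0 < α ∧ MetrRegWith F xb yb α}, ENNReal.ofReal α

/-- `x` is an isolated point of `S`. -/
def IsIsolatedIn (x : X) (S : Set X) : Prop :=
  x ∈ S ∧ ∃ ε > 0, ∀ y ∈ S ∩ Metric.ball x ε, y = x

end Maps

section Statements

variable {E : Type*} [NormedAddCommGroup E] [InnerProductSpace ℝ E] [FiniteDimensional ℝ E]

lemma mem_projSet_self {A : Set E} {b : E} (hb : b ∈ A) : b ∈ projSet A b :=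
  ⟨hb, by simp [Metric.infDist_zero_of_mem hb]⟩

lemma projSet_eq_self {A : Set E} {b bA : E} (hb : b ∈ A) (hbA : bA ∈ projSet A b) : bA = b := by
  have h0 : ‖b - bA‖ = 0 := by rw [hbA.2, Metric.infDist_zero_of_mem hb]
  have := norm_sub_eq_zero_iff.mp h0
  exact this.symm

lemma prox_ineq {A : Set E} {x0 xb : E} (hproj : xb ∈ projSet A x0) {b : E} (hb : b ∈ A) :
    ⟪x0 - xb, b - xb⟫ ≤ ‖b - xb‖ ^ 2 / 2 := by
  have h1 : ‖x0 - xb‖ ≤ ‖x0 - b‖ := by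
    rw [hproj.2]
    simpa [dist_eq_norm] using Metric.infDist_le_dist_of_mem hb
  have h2 : ‖x0 - xb‖ ^ 2 ≤ ‖x0 - b‖ ^ 2 :=
    pow_le_pow_left₀ (norm_nonneg _) h1 2
  have h3 : x0 - b = (x0 - xb) - (b - xb) := by abel
  have h4 : ‖(x0 - xb) - (b - xb)‖ ^ 2
      = ‖x0 - xb‖ ^ 2 - 2 * ⟪x0 - xb, b - xb⟫ + ‖b - xb‖ ^ 2 := norm_sub_sq_real _ _
  rw [h3, h4] at h2
  linarith

theorem stmt2 (A A' : Set E) (hA : IsClosed A) (hAne : A.Nonempty)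
    (xb : E) (hxb : xb ∈ A) (ε δ : ℝ) (hε : 0 < ε) (hδ : 0 < δ) :
    ((∀ b ∈ A ∩ Metric.ball xb δ, ∀ a ∈ A ∩ Metric.ball xb δ, ∀ v ∈ proxNCRes A A' a,
        ⟪v, b - a⟫ ≤ ε * ‖v‖ * ‖b - a‖) ↔
      ∀ a ∈ A ∩ Metric.ball xb δ, ∀ v ∈ proxNCRes A A' a,
        ElemSubregOn A A a v ε 0 (Metric.ball xb δ)) ∧
    ((∀ b ∈ A ∩ Metric.ball xb δ, ∀ a ∈ A ∩ Metric.ball xb δ, ∀ v ∈ proxNCRes A A' a,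
        ⟪v, b - a⟫ ≤ ε * ‖v‖ * ‖b - a‖) →
      ∀ v ∈ proxNCRes A A' xb, v ≠ 0 →
        ∃ V ∈ nhds v, ∀ u ∈ limNC A xb ∩ V, ∃ U ∈ nhds xb, ElemSubregOn A A xb u ε 0 U) := by
  constructor
  · constructor
    · intro reg a ha v hv b hb bA hbA
      rw [projSet_eq_self hb.1 hbA]
      simp only [sub_self, sub_zero, add_zero, Real.rpow_one]
      exact reg b hb a ha v hv
    · intro h b hb a ha v hv
      have := h a ha v hv b hb b (mem_projSet_self hb.1)
      simpa [Real.rpow_one] using this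
  · intro _reg v hv hv0
    obtain ⟨lam, hlam, x0, hx0A', hproj, rfl⟩ := hv
    have hlampos : 0 < lam := by
      rcases hlam.lt_or_eq with h | h
      · exact h
      · exact absurd (by rw [← h, zero_smul]) hv0
    set v := lam • (x0 - xb) with hv_def
    have hvnorm : 0 < ‖v‖ := norm_pos_iff.mpr hv0
    set ρ : ℝ := ε * ‖v‖ / (2 * (1 + ε)) with hρ_def
    have hρpos : 0 < ρ := by positivity
    refine ⟨Metric.ball v ρ, Metric.ball_mem_nhds v hρpos, ?_⟩
    intro u hu
    set r : ℝ := ε * ‖v‖ / lam with hr_def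
    have hrpos : 0 < r := by positivity
    refine ⟨Metric.ball xb r, Metric.ball_mem_nhds xb hrpos, ?_⟩
    intro b hb bA hbA
    rw [projSet_eq_self hb.1 hbA]
    simp only [sub_self, sub_zero, add_zero, Real.rpow_one]
    -- key facts
    have hs : 0 ≤ ‖b - xb‖ := norm_nonneg _
    have hsr : ‖b - xb‖ < r := by
      have := hb.2
      rwa [Metric.mem_ball, dist_eq_norm] at this
    have h1 : ⟪v, b - xb⟫ ≤ lam * (‖b - xb‖ ^ 2 / 2) := by
      rw [hv_def, real_inner_smul_left]
      exact mul_le_mul_of_nonneg_left (prox_ineq hproj hb.1) hlam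
    have hm : ‖u - v‖ < ρ := by
      have := hu.2
      rwa [Metric.mem_ball, dist_eq_norm] at this
    have hm0 : 0 ≤ ‖u - v‖ := norm_nonneg _
    have h5 : ⟪u - v, b - xb⟫ ≤ ‖u - v‖ * ‖b - xb‖ := real_inner_le_norm _ _
    have h4 : ⟪u, b - xb⟫ = ⟪v, b - xb⟫ + ⟪u - v, b - xb⟫ := by
      rw [inner_sub_left]; ring
    have h6 : ‖v‖ - ‖u - v‖ ≤ ‖u‖ := by
      have := norm_sub_norm_le v u
      have h7 : ‖v - u‖ = ‖u - v‖ := norm_sub_rev _ _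
      linarith
    -- lam * r = ε * ‖v‖
    have hlr : lam * r = ε * ‖v‖ := by
      rw [hr_def]; field_simp
    -- ρ * (2 * (1 + ε)) = ε * ‖v‖
    have hρε : ρ * (2 * (1 + ε)) = ε * ‖v‖ := by
      rw [hρ_def]; field_simp
    have hsq : lam * (‖b - xb‖ ^ 2 / 2) ≤ lam * (r * ‖b - xb‖) / 2 := by
      have : ‖b - xb‖ ^ 2 ≤ r * ‖b - xb‖ := by nlinarith
      nlinarith
    have hεu : ε * (‖v‖ - ‖u - v‖) ≤ ε * ‖u‖ :=
      mul_le_mul_of_nonneg_left h6 hε.le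
    nlinarith [mul_le_mul_of_nonneg_right hεu hs, mul_le_mul_of_nonneg_right hm.le hs,
      mul_nonneg hε.le (mul_nonneg hm0 hs)]

end Statements
end

section
/- A nonempty closed subset A of a Euclidean space E is Clarke regular at x̄ ∈ A if and only if A is uniformly elementally regular at x̄ for every pair (x̄,v) with v ∈ N_A(x̄); that is, if and only if for every v ∈ N_A(x̄) and every ε > 0 there is a δ > 0 such that ⟨v, x − x̄⟩ ≤ ε ‖v‖ ‖x − x̄‖ for all x ∈ A ∩ B_δ(x̄). -/
open Metric Set Pointwise Filter ENNReal
open scoped RealInnerProductSpace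

section Statements

variable {E : Type*} [NormedAddCommGroup E] [InnerProductSpace ℝ E] [FiniteDimensional ℝ E]

lemma frechet_subset_lim (A : Set E) (hA : IsClosed A) (xb : E) (hxb : xb ∈ A) :
    frechetNC A xb ⊆ limNC A xb := by
  intro v hv
  have hproj : ∀ s : ℝ, ∃ a, a ∈ projSet A (xb + s • v) := by
    intro s
    obtain ⟨p, hp, hd⟩ := hA.exists_infDist_eq_dist ⟨xb, hxb⟩ (xb + s • v)
    exact ⟨p, hp, by rw [hd, dist_eq_norm]⟩
  choose a ha using hproj
  -- basic estimate: ‖a s - xb‖² ≤ 2 s ⟪v, a s - xb⟫ for s ≥ 0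
  have key : ∀ s : ℝ, 0 ≤ s → ‖a s - xb‖ ^ 2 ≤ 2 * s * ⟪v, a s - xb⟫ := by
    intro s hs
    have h1 : ‖xb + s • v - a s‖ ≤ ‖s • v‖ := by
      rw [(ha s).2]
      calc Metric.infDist (xb + s • v) A ≤ dist (xb + s • v) xb := infDist_le_dist_of_mem hxb
        _ = ‖s • v‖ := by rw [dist_eq_norm]; congr 1; abel
    have h2 : ‖s • v - (a s - xb)‖ ^ 2 ≤ ‖s • v‖ ^ 2 := by
      have : xb + s • v - a s = s • v - (a s - xb) := by abel
      rw [this] at h1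
      exact pow_le_pow_left₀ (norm_nonneg _) h1 2
    have h3 : ‖s • v - (a s - xb)‖ ^ 2 =
        ‖s • v‖ ^ 2 - 2 * ⟪s • v, a s - xb⟫ + ‖a s - xb‖ ^ 2 := by
      rw [← real_inner_self_eq_norm_sq, ← real_inner_self_eq_norm_sq,
        ← real_inner_self_eq_norm_sq, inner_sub_sub_self,
        real_inner_comm (a s - xb) (s • v)]
      ring
    have h4 : ⟪s • v, a s - xb⟫ = s * ⟪v, a s - xb⟫ := real_inner_smul_left _ _ _
    nlinarith [h2, h3, h4]
  -- refined estimate using Fréchet property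
  have est : ∀ ε > (0:ℝ), ∃ t0 > (0:ℝ), ∀ s : ℝ, 0 < s → s ≤ t0 → ‖a s - xb‖ ≤ s * ε := by
    intro ε hε
    obtain ⟨δ, hδ, hδ'⟩ := hv (ε / 2) (by linarith)
    refine ⟨δ / (2 * ‖v‖ + 1), by positivity, fun s hs hst => ?_⟩
    have hcs : ⟪v, a s - xb⟫ ≤ ‖v‖ * ‖a s - xb‖ := real_inner_le_norm _ _
    have hk := key s hs.le
    have h5 : 2 * s * ⟪v, a s - xb⟫ ≤ 2 * s * (‖v‖ * ‖a s - xb‖) :=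
      mul_le_mul_of_nonneg_left hcs (by positivity)
    have hub : ‖a s - xb‖ ≤ 2 * s * ‖v‖ := by
      nlinarith [hk, h5, norm_nonneg (a s - xb), mul_nonneg hs.le (norm_nonneg v)]
    have hlt : ‖a s - xb‖ < δ := by
      calc ‖a s - xb‖ ≤ 2 * s * ‖v‖ := hub
        _ ≤ 2 * (δ / (2 * ‖v‖ + 1)) * ‖v‖ := by
            have := norm_nonneg v; nlinarith
        _ < δ := by
            have hv0 := norm_nonneg v
            have hc : (0:ℝ) < 2 * ‖v‖ + 1 := by positivity
            rw [show 2 * (δ / (2 * ‖v‖ + 1)) * ‖v‖ = δ * (2 * ‖v‖) / (2 * ‖v‖ + 1) by ring,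
              div_lt_iff₀ hc]
            nlinarith
    have hfre : ⟪v, a s - xb⟫ ≤ ε / 2 * ‖a s - xb‖ := hδ' _ (ha s).1 hlt
    have h6 : 2 * s * ⟪v, a s - xb⟫ ≤ 2 * s * (ε / 2 * ‖a s - xb‖) :=
      mul_le_mul_of_nonneg_left hfre (by positivity)
    nlinarith [hk, h6, norm_nonneg (a s - xb), mul_pos hs hε]
  set t : ℕ → ℝ := fun k => 1 / (k + 1) with ht
  have htpos : ∀ k : ℕ, 0 < t k := fun k => by positivity
  have htne : ∀ k : ℕ, t k ≠ 0 := fun k => (htpos k).ne'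
  -- the sequences
  refine ⟨fun k => a (t k), fun k => v + (t k)⁻¹ • (xb - a (t k)), fun k => (ha _).1,
    fun k => ?_, ?_, ?_⟩
  · refine ⟨(t k)⁻¹, by positivity, xb + t k • v, ha _, ?_⟩
    rw [show xb + t k • v - a (t k) = t k • v + (xb - a (t k)) by abel, smul_add,
      smul_smul, inv_mul_cancel₀ (htne k), one_smul]
  -- helper: eventual bounds
  all_goals {
    rw [Metric.tendsto_atTop]
    intro ε hε
    obtain ⟨t0, ht0, hest⟩ := est (ε / 2) (by linarith)
    obtain ⟨N, hN⟩ := exists_nat_gt (max (1 / t0) 1)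
    refine ⟨N, fun n hn => ?_⟩
    have hn1 : (1 / t0 : ℝ) < n := lt_of_le_of_lt (le_max_left _ _)
      (hN.trans_le (by exact_mod_cast hn))
    have htn : t n ≤ t0 := by
      rw [ht]
      rw [div_lt_iff₀ ht0] at hn1
      rw [div_le_iff₀ (by positivity)]
      nlinarith
    have hbound := hest (t n) (htpos n) htn
    have htn1 : t n ≤ 1 := by
      rw [ht, div_le_one (by positivity)]
      linarith [Nat.cast_nonneg (α := ℝ) n]
    first
    | -- goal: dist (a (t n)) xb < ε
      ( rw [dist_eq_norm]
        calc ‖a (t n) - xb‖ ≤ t n * (ε / 2) := hbound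
          _ ≤ 1 * (ε / 2) := by nlinarith
          _ < ε := by linarith )
    | -- goal: dist (v + (t n)⁻¹ • (xb - a (t n))) v < ε
      ( rw [dist_eq_norm, show v + (t n)⁻¹ • (xb - a (t n)) - v = (t n)⁻¹ • (xb - a (t n)) by abel,
          norm_smul, Real.norm_eq_abs, abs_of_pos (inv_pos.mpr (htpos n)),
          show xb - a (t n) = -(a (t n) - xb) by abel, norm_neg]
        calc (t n)⁻¹ * ‖a (t n) - xb‖ ≤ (t n)⁻¹ * (t n * (ε / 2)) := by
              exact mul_le_mul_of_nonneg_left hbound (by positivity)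
          _ = ε / 2 := by rw [← mul_assoc, inv_mul_cancel₀ (htne n), one_mul]
          _ < ε := by linarith ) }

theorem stmt3 (A : Set E) (hA : IsClosed A) (hAne : A.Nonempty) (xb : E) (hxb : xb ∈ A) :
    limNC A xb = frechetNC A xb ↔
      ∀ v ∈ limNC A xb, ∀ ε > 0, ∃ δ > 0, ∀ x ∈ A ∩ Metric.ball xb δ,
        ⟪v, x - xb⟫ ≤ ε * ‖v‖ * ‖x - xb‖ := by
  constructor
  · intro h v hv ε hε
    rw [h] at hv
    by_cases hv0 : v = 0
    · exact ⟨1, one_pos, fun x _ => by simp [hv0]⟩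
    · have hvn : 0 < ‖v‖ := norm_pos_iff.mpr hv0
      obtain ⟨δ, hδ, hδ'⟩ := hv (ε * ‖v‖) (by positivity)
      refine ⟨δ, hδ, fun x hx => ?_⟩
      have := hδ' x hx.1 (by rw [← dist_eq_norm]; exact mem_ball.mp hx.2)
      linarith [this]
  · intro H
    apply Set.Subset.antisymm
    · intro v hv ε hε
      have hden : (0:ℝ) < ‖v‖ + 1 := by positivity
      obtain ⟨δ, hδ, hδ'⟩ := H v hv (ε / (‖v‖ + 1)) (by positivity)
      refine ⟨δ, hδ, fun x hxA hxd => ?_⟩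
      have hx : x ∈ A ∩ Metric.ball xb δ :=
        ⟨hxA, mem_ball.mpr (by rw [dist_eq_norm]; exact hxd)⟩
      calc ⟪v, x - xb⟫ ≤ ε / (‖v‖ + 1) * ‖v‖ * ‖x - xb‖ := hδ' x hx
        _ ≤ ε * ‖x - xb‖ := by
            rw [div_mul_eq_mul_div, div_mul_eq_mul_div, div_le_iff₀ hden]
            have := norm_nonneg v
            nlinarith [norm_nonneg (x - xb)]
    · exact frechet_subset_lim A hA xb hxb

end Statements
end

section
/- Let A and B be closed subsets of a Euclidean space E and x̄ ∈ A ∩ B. The collection {A,B} is subtransversal at x̄ if and only if there exist numbers δ > 0 and α > 0 such that α d(x, A ∩ B) ≤ max{d(x,A), d(x,B)} for all x ∈ B_δ(x̄). Moreover, sr[A,B](x̄) equals the exact upper bound of all numbers α for which this inequality holds with some δ > 0. -/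
open Metric Set Pointwise Filter ENNReal
open scoped RealInnerProductSpace

section Statements

variable {E : Type*} [NormedAddCommGroup E] [InnerProductSpace ℝ E] [FiniteDimensional ℝ E]

lemma stmt7_key (A B : Set E) (xb : E) (hxb : xb ∈ A ∩ B) (α : ℝ) (hα : 0 < α) :
    (∃ δ > (0 : ℝ), SubtransversalWith A B xb α δ) ↔
    (∃ δ > (0 : ℝ), ∀ x ∈ Metric.ball xb δ,
      α * Metric.infDist x (A ∩ B) ≤ max (Metric.infDist x A) (Metric.infDist x B)) := by
  constructor
  · rintro ⟨δ, hδ, h⟩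
    refine ⟨δ, hδ, fun x hx => ?_⟩
    set m := max (Metric.infDist x A) (Metric.infDist x B) with hm
    set d := Metric.infDist x (A ∩ B) with hd
    have hm0 : 0 ≤ m := le_max_of_le_left (Metric.infDist_nonneg)
    have hdδ : d < δ := lt_of_le_of_lt (Metric.infDist_le_dist_of_mem hxb) (mem_ball.mp hx)
    by_contra hc
    push_neg at hc
    have hma : m / α < d := (div_lt_iff₀' hα).mpr hc
    set ρ := (m / α + d) / 2 with hρ
    have h1 : m / α < ρ := by
      rw [hρ]; linarith
    have h2 : ρ < d := by
      rw [hρ]; linarith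
    have hρ0 : 0 < ρ := lt_of_le_of_lt (div_nonneg hm0 hα.le) h1
    have hρδ : ρ < δ := h2.trans hdδ
    have hαρ : m < α * ρ := by
      rw [div_lt_iff₀' hα] at h1; linarith
    have hxA : x ∈ A + Metric.ball 0 (α * ρ) := by
      have : Metric.infDist x A < α * ρ := lt_of_le_of_lt (le_max_left _ _) hαρ
      obtain ⟨a, ha, hda⟩ := (Metric.infDist_lt_iff ⟨xb, hxb.1⟩).mp this
      exact ⟨a, ha, x - a, by simpa [mem_ball, dist_eq_norm] using hda, by module⟩
    have hxB : x ∈ B + Metric.ball 0 (α * ρ) := by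
      have : Metric.infDist x B < α * ρ := lt_of_le_of_lt (le_max_right _ _) hαρ
      obtain ⟨b, hb, hdb⟩ := (Metric.infDist_lt_iff ⟨xb, hxb.2⟩).mp this
      exact ⟨b, hb, x - b, by simpa [mem_ball, dist_eq_norm] using hdb, by module⟩
    have := h ρ ⟨hρ0, hρδ⟩ ⟨⟨hxA, hxB⟩, hx⟩
    obtain ⟨w, hw, s, hs, hws⟩ := this
    have : d ≤ dist x w := Metric.infDist_le_dist_of_mem hw
    have hxw : dist x w < ρ := by
      have : x - w = s := by rw [← hws]; module
      rw [dist_eq_norm, this]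
      simpa [mem_ball, dist_eq_norm] using hs
    linarith
  · rintro ⟨δ, hδ, h⟩
    refine ⟨δ, hδ, fun ρ hρ x hx => ?_⟩
    obtain ⟨⟨hxA, hxB⟩, hxδ⟩ := hx
    have hdA : Metric.infDist x A < α * ρ := by
      obtain ⟨a, ha, s, hs, has⟩ := hxA
      have : dist x a < α * ρ := by
        have : x - a = s := by rw [← has]; module
        rw [dist_eq_norm, this]; simpa [mem_ball, dist_eq_norm] using hs
      exact lt_of_le_of_lt (Metric.infDist_le_dist_of_mem ha) this
    have hdB : Metric.infDist x B < α * ρ := by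
      obtain ⟨b, hb, s, hs, hbs⟩ := hxB
      have : dist x b < α * ρ := by
        have : x - b = s := by rw [← hbs]; module
        rw [dist_eq_norm, this]; simpa [mem_ball, dist_eq_norm] using hs
      exact lt_of_le_of_lt (Metric.infDist_le_dist_of_mem hb) this
    have := h x hxδ
    have hdlt : Metric.infDist x (A ∩ B) < ρ := by
      have hmax : max (Metric.infDist x A) (Metric.infDist x B) < α * ρ := max_lt hdA hdB
      have := lt_of_le_of_lt this hmax
      exact lt_of_mul_lt_mul_left (by linarith) hα.le
    obtain ⟨w, hw, hdw⟩ := (Metric.infDist_lt_iff ⟨xb, hxb⟩).mp hdlt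
    exact ⟨w, hw, x - w, by simpa [mem_ball, dist_eq_norm] using hdw, by module⟩

theorem stmt7 (A B : Set E) (hA : IsClosed A) (hB : IsClosed B) (xb : E) (hxb : xb ∈ A ∩ B) :
    (Subtransversal A B xb ↔ ∃ δ > (0 : ℝ), ∃ α > (0 : ℝ), ∀ x ∈ Metric.ball xb δ,
        α * Metric.infDist x (A ∩ B) ≤ max (Metric.infDist x A) (Metric.infDist x B)) ∧
    srColl A B xb =
      ⨆ α ∈ {α : ℝ | 0 < α ∧ ∃ δ > (0 : ℝ), ∀ x ∈ Metric.ball xb δ,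
        α * Metric.infDist x (A ∩ B) ≤ max (Metric.infDist x A) (Metric.infDist x B)},
        ENNReal.ofReal α := by
  have hset : {α : ℝ | 0 < α ∧ ∃ δ > (0 : ℝ), SubtransversalWith A B xb α δ} =
      {α : ℝ | 0 < α ∧ ∃ δ > (0 : ℝ), ∀ x ∈ Metric.ball xb δ,
        α * Metric.infDist x (A ∩ B) ≤ max (Metric.infDist x A) (Metric.infDist x B)} := by
    ext α
    simp only [Set.mem_setOf_eq]
    exact and_congr_right fun hα => stmt7_key A B xb hxb α hα
  constructor
  · constructor
    · rintro ⟨α, hα, hs⟩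
      obtain ⟨δ, hδ, h⟩ := (stmt7_key A B xb hxb α hα).mp hs
      exact ⟨δ, hδ, α, hα, h⟩
    · rintro ⟨δ, hδ, α, hα, h⟩
      exact ⟨α, hα, (stmt7_key A B xb hxb α hα).mpr ⟨δ, hδ, h⟩⟩
  · rw [srColl, hset]

end Statements
end

section
/- Let A and B be closed subsets of a Euclidean space E and x̄ ∈ A ∩ B. The collection {A,B} is subtransversal at x̄ if and only if there exist numbers δ > 0 and α > 0 such that α d(x, A ∩ B) ≤ d(x, B) for all x ∈ A ∩ B_δ(x̄). Moreover, denoting by sr' the exact upper bound of all numbers α for which this inequality holds with some δ > 0, one has sr'/(sr' + 2) ≤ sr[A,B](x̄) ≤ sr'. -/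
open Metric Set Pointwise Filter ENNReal
open scoped RealInnerProductSpace

section Statements

variable {E : Type*} [NormedAddCommGroup E] [InnerProductSpace ℝ E] [FiniteDimensional ℝ E]

/-- From subtransversality with constant `α` to the distance inequality with the same `α`. -/
lemma sub_to_P_aux (A B : Set E) (xb : E) (hxb : xb ∈ A ∩ B) {α δ : ℝ} (hα : 0 < α)
    (hδ : 0 < δ) (h : SubtransversalWith A B xb α δ) :
    ∃ δ' > (0 : ℝ), ∀ x ∈ A ∩ Metric.ball xb δ',
      α * Metric.infDist x (A ∩ B) ≤ Metric.infDist x B := by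
  refine ⟨min δ (α * δ / 2), by positivity, ?_⟩
  rintro x ⟨hxA, hxball⟩
  have hxball' : dist x xb < min δ (α * δ / 2) := hxball
  set d := Metric.infDist x B with hd
  have hd0 : (0 : ℝ) ≤ d := Metric.infDist_nonneg
  have hdlt : d < α * δ / 2 :=
    lt_of_le_of_lt (Metric.infDist_le_dist_of_mem hxb.2)
      (lt_of_lt_of_le hxball' (min_le_right _ _))
  have hdiv : d / α < δ / 2 := by
    rw [div_lt_iff₀ hα]; nlinarith
  have key : Metric.infDist x (A ∩ B) ≤ d / α := by
    apply _root_.le_of_forall_pos_le_add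
    intro ε hε
    set ρ := min (d / α + ε) ((d / α + δ) / 2) with hρdef
    have hdα0 : (0 : ℝ) ≤ d / α := div_nonneg hd0 hα.le
    have hρ1 : d / α < ρ := lt_min (by linarith) (by linarith)
    have hρ2 : ρ < δ := lt_of_le_of_lt (min_le_right _ _) (by linarith)
    have hρ0 : 0 < ρ := lt_of_le_of_lt hdα0 hρ1
    have hαρ : d < α * ρ := by
      have := (div_lt_iff₀ hα).1 hρ1
      nlinarith
    have hx : x ∈ (A ∩ B) + Metric.ball 0 ρ := by
      apply h ρ ⟨hρ0, hρ2⟩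
      refine ⟨⟨?_, ?_⟩, ?_⟩
      · exact Set.mem_add.2 ⟨x, hxA, 0, by simpa using mul_pos hα hρ0, by simp⟩
      · obtain ⟨b, hbB, hb⟩ := (Metric.infDist_lt_iff ⟨xb, hxb.2⟩).1 hαρ
        exact Set.mem_add.2 ⟨b, hbB, x - b, by
          simpa [mem_ball_zero_iff, ← dist_eq_norm] using hb, by abel⟩
      · exact lt_of_lt_of_le hxball' (min_le_left _ _)
    obtain ⟨y, hy, v, hv, hyv⟩ := Set.mem_add.1 hx
    have hvn : ‖v‖ < ρ := mem_ball_zero_iff.1 hv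
    have : dist x y < ρ := by
      rw [dist_eq_norm]
      have : x - y = v := by rw [← hyv]; abel
      rw [this]; exact hvn
    calc Metric.infDist x (A ∩ B) ≤ dist x y := Metric.infDist_le_dist_of_mem hy
      _ ≤ ρ := this.le
      _ ≤ d / α + ε := min_le_left _ _
  calc α * Metric.infDist x (A ∩ B) ≤ α * (d / α) :=
        mul_le_mul_of_nonneg_left key hα.le
    _ = d := by field_simp

/-- From the distance inequality with constant `α` to subtransversality with `α/(α+2)`. -/
lemma P_to_sub_aux (A B : Set E) (xb : E) (hxb : xb ∈ A ∩ B) {α δ : ℝ} (hα : 0 < α)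
    (hδ : 0 < δ)
    (h : ∀ x ∈ A ∩ Metric.ball xb δ, α * Metric.infDist x (A ∩ B) ≤ Metric.infDist x B) :
    SubtransversalWith A B xb (α / (α + 2)) (δ / 2) := by
  have hα2 : (0 : ℝ) < α + 2 := by linarith
  set α' := α / (α + 2) with hα'def
  have hα'pos : 0 < α' := div_pos hα hα2
  have hα'lt1 : α' < 1 := (div_lt_one hα2).2 (by linarith)
  have hkey : α' * (α + 2) = α := div_mul_cancel₀ _ (ne_of_gt hα2)
  rintro ρ ⟨hρ0, hρδ⟩ z ⟨⟨hz1, hz2⟩, hz3⟩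
  obtain ⟨a, haA, u, hu, hau⟩ := Set.mem_add.1 hz1
  obtain ⟨b, hbB, v, hv, hbv⟩ := Set.mem_add.1 hz2
  have hun : ‖u‖ < α' * ρ := mem_ball_zero_iff.1 hu
  have hvn : ‖v‖ < α' * ρ := mem_ball_zero_iff.1 hv
  have hdza : dist z a = ‖u‖ := by
    rw [dist_eq_norm]
    have : z - a = u := by rw [← hau]; abel
    rw [this]
  have hdzb : dist z b = ‖v‖ := by
    rw [dist_eq_norm]
    have : z - b = v := by rw [← hbv]; abel
    rw [this]
  have hdzxb : dist z xb < δ / 2 := hz3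
  have haball : a ∈ Metric.ball xb δ := by
    have : dist a xb ≤ dist a z + dist z xb := dist_triangle _ _ _
    have h1 : dist a z = ‖u‖ := by rw [dist_comm]; exact hdza
    rw [mem_ball]
    nlinarith [mul_lt_mul_of_pos_right hα'lt1 hρ0]
  have hP := h a ⟨haA, haball⟩
  have hab : dist a b < 2 * (α' * ρ) := by
    have : dist a b ≤ dist a z + dist z b := dist_triangle _ _ _
    have h1 : dist a z = ‖u‖ := by rw [dist_comm]; exact hdza
    nlinarith
  have hBab : Metric.infDist a B ≤ dist a b := Metric.infDist_le_dist_of_mem hbB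
  set m := Metric.infDist a (A ∩ B) with hm
  have hm0 : (0 : ℝ) ≤ m := Metric.infDist_nonneg
  have hαm : α * m < 2 * (α' * ρ) := lt_of_le_of_lt (le_trans hP hBab) hab
  have hz_lt : Metric.infDist z (A ∩ B) < ρ := by
    have htri : Metric.infDist z (A ∩ B) ≤ m + dist z a :=
      Metric.infDist_le_infDist_add_dist
    have hsum : α * (m + dist z a) < α * ρ := by nlinarith
    have : m + dist z a < ρ := lt_of_mul_lt_mul_left hsum hα.le
    linarith [htri]
  obtain ⟨y, hy, hzy⟩ := (Metric.infDist_lt_iff ⟨xb, hxb⟩).1 hz_lt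
  exact Set.mem_add.2 ⟨y, hy, z - y, by
    simpa [mem_ball_zero_iff, ← dist_eq_norm] using hzy, by abel⟩

theorem stmt8 (A B : Set E) (hA : IsClosed A) (hB : IsClosed B) (xb : E) (hxb : xb ∈ A ∩ B) :
    (Subtransversal A B xb ↔ ∃ δ > (0 : ℝ), ∃ α > (0 : ℝ), ∀ x ∈ A ∩ Metric.ball xb δ,
        α * Metric.infDist x (A ∩ B) ≤ Metric.infDist x B) ∧
    (⨆ α ∈ {α : ℝ | 0 < α ∧ ∃ δ > (0 : ℝ), ∀ x ∈ A ∩ Metric.ball xb δ,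
        α * Metric.infDist x (A ∩ B) ≤ Metric.infDist x B}, ENNReal.ofReal α) /
      ((⨆ α ∈ {α : ℝ | 0 < α ∧ ∃ δ > (0 : ℝ), ∀ x ∈ A ∩ Metric.ball xb δ,
        α * Metric.infDist x (A ∩ B) ≤ Metric.infDist x B}, ENNReal.ofReal α) + 2) ≤
      srColl A B xb ∧
    srColl A B xb ≤
      ⨆ α ∈ {α : ℝ | 0 < α ∧ ∃ δ > (0 : ℝ), ∀ x ∈ A ∩ Metric.ball xb δ,
        α * Metric.infDist x (A ∩ B) ≤ Metric.infDist x B}, ENNReal.ofReal α := by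
  set S' : Set ℝ := {α : ℝ | 0 < α ∧ ∃ δ > (0 : ℝ), ∀ x ∈ A ∩ Metric.ball xb δ,
        α * Metric.infDist x (A ∩ B) ≤ Metric.infDist x B} with hS'
  set s' : ℝ≥0∞ := ⨆ α ∈ S', ENNReal.ofReal α with hs'
  -- membership transfers
  have hsub_to : ∀ α ∈ {α : ℝ | 0 < α ∧ ∃ δ > (0:ℝ), SubtransversalWith A B xb α δ},
      α ∈ S' := by
    rintro α ⟨hα, δ, hδ, hsub⟩
    obtain ⟨δ', hδ', hP⟩ := sub_to_P_aux A B xb hxb hα hδ hsub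
    exact ⟨hα, δ', hδ', hP⟩
  have hto_sub : ∀ α ∈ S', (α / (α + 2)) ∈
      {α : ℝ | 0 < α ∧ ∃ δ > (0:ℝ), SubtransversalWith A B xb α δ} := by
    rintro α ⟨hα, δ, hδ, hP⟩
    exact ⟨by positivity, δ / 2, by positivity, P_to_sub_aux A B xb hxb hα hδ hP⟩
  refine ⟨?_, ?_, ?_⟩
  · constructor
    · rintro ⟨α, hα, δ, hδ, hsub⟩
      obtain ⟨δ', hδ', hP⟩ := sub_to_P_aux A B xb hxb hα hδ hsub
      exact ⟨δ', hδ', α, hα, hP⟩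
    · rintro ⟨δ, hδ, α, hα, hP⟩
      exact ⟨α / (α + 2), by positivity, δ / 2, by positivity,
        P_to_sub_aux A B xb hxb hα hδ hP⟩
  · -- s' / (s' + 2) ≤ srColl
    by_cases hstop : s' = ⊤
    · rw [hstop]
      simp [top_add, ENNReal.div_top]
    · rw [ENNReal.div_le_iff (by simp) (by
        simp [ENNReal.add_eq_top, hstop])]
      apply iSup₂_le
      intro α hmem
      have hα := hmem.1
      have hα2 : (0:ℝ) < α + 2 := by linarith
      have h1 : ENNReal.ofReal (α / (α + 2)) ≤ srColl A B xb := by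
        unfold srColl
        exact le_iSup₂ (f := fun (β : ℝ) (_ : β ∈ _) => ENNReal.ofReal β)
          (α / (α + 2)) (hto_sub α hmem)
      have h2 : ENNReal.ofReal α ≤ s' :=
        le_iSup₂ (f := fun (β : ℝ) (_ : β ∈ S') => ENNReal.ofReal β) α hmem
      have heq : ENNReal.ofReal α
          = ENNReal.ofReal (α / (α + 2)) * (ENNReal.ofReal α + 2) := by
        rw [show ENNReal.ofReal α + 2 = ENNReal.ofReal (α + 2) by
          rw [ENNReal.ofReal_add hα.le (by norm_num)]; norm_num,
          ← ENNReal.ofReal_mul (by positivity), div_mul_cancel₀ _ (ne_of_gt hα2)]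
      rw [heq]
      exact mul_le_mul' h1 (add_le_add_left h2 2)
  · -- srColl ≤ s'
    unfold srColl
    apply iSup₂_le
    intro α hmem
    exact le_iSup₂ (f := fun (β : ℝ) (_ : β ∈ S') => ENNReal.ofReal β) α (hsub_to α hmem)

end Statements
end

section
/- Let A and B be closed subsets of a Euclidean space E and x̄ ∈ A ∩ B. The collection {A,B} is transversal at x̄ if and only if there exist numbers δ > 0 and α > 0 such that α d(x, (A − x₁) ∩ (B − x₂)) ≤ max{d(x, A − x₁), d(x, B − x₂)} for all x ∈ B_δ(x̄) and all x₁, x₂ ∈ δ𝔹. Moreover, rg[A,B](x̄) equals the exact upper bound of all numbers α for which this inequality holds with some δ > 0. -/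
open Metric Set Pointwise Filter ENNReal
open scoped RealInnerProductSpace

section Statements

variable {E : Type*} [NormedAddCommGroup E] [InnerProductSpace ℝ E] [FiniteDimensional ℝ E]

set_option linter.unusedSectionVars false

section Aux
variable {E : Type*} [NormedAddCommGroup E] [InnerProductSpace ℝ E] [FiniteDimensional ℝ E]

lemma infEdist_sub_image (A : Set E) (x v : E) :
    EMetric.infEdist x ((· - v) '' A) = EMetric.infEdist (x + v) A := by
  have hiso : Isometry (fun z : E => z - v) :=
    Isometry.of_dist_eq (fun a b => dist_sub_right a b v)
  have h := EMetric.infEdist_image (x := x + v) (t := A) hiso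
  simp at h; exact h


def MetricProp (A B : Set E) (xb : E) (α δ : ℝ) : Prop :=
  ∀ x ∈ Metric.ball xb δ, ∀ x₁ ∈ Metric.ball (0 : E) δ, ∀ x₂ ∈ Metric.ball (0 : E) δ,
    ENNReal.ofReal α * EMetric.infEdist x (((· - x₁) '' A) ∩ ((· - x₂) '' B)) ≤
      max (EMetric.infEdist x ((· - x₁) '' A)) (EMetric.infEdist x ((· - x₂) '' B))

lemma metric_to_trans {A B : Set E} {xb : E} {α δ : ℝ} (hα : 0 < α) (hδ : 0 < δ)
    (h : MetricProp A B xb α δ) : TransversalWith A B xb α (δ / (2 * (1 + α))) := by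
  intro ρ hρ a ha b hb x₁ x₂ hx
  set δ' := δ / (2 * (1 + α)) with hδ'def
  have h1α : (0:ℝ) < 1 + α := by linarith
  have hδ'pos : 0 < δ' := by positivity
  have hsum : (1 + α) * δ' < δ := by
    have : (1 + α) * δ' = δ / 2 := by rw [hδ'def]; field_simp
    linarith
  have hx₁ : ‖x₁‖ < α * ρ := lt_of_le_of_lt (le_max_left _ _) hx
  have hx₂ : ‖x₂‖ < α * ρ := lt_of_le_of_lt (le_max_right _ _) hx
  have hρδ' : ρ < δ' := hρ.2
  have hρpos : 0 < ρ := hρ.1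
  set y₁ := a + x₁ - xb with hy₁def
  set y₂ := b + x₂ - xb with hy₂def
  have hay : ‖y₁‖ < δ := by
    calc ‖y₁‖ ≤ ‖a - xb‖ + ‖x₁‖ := by
          rw [hy₁def]; have : a + x₁ - xb = (a - xb) + x₁ := by abel
          rw [this]; exact norm_add_le _ _
      _ < δ' + α * δ' := by
          have h1 : ‖a - xb‖ < δ' := by
            have := ha.2; rwa [mem_ball, dist_eq_norm] at this
          have h2 : ‖x₁‖ < α * δ' := lt_of_lt_of_le hx₁
            (by nlinarith)
          linarith
      _ = (1 + α) * δ' := by ring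
      _ < δ := hsum
  have hby : ‖y₂‖ < δ := by
    calc ‖y₂‖ ≤ ‖b - xb‖ + ‖x₂‖ := by
          rw [hy₂def]; have : b + x₂ - xb = (b - xb) + x₂ := by abel
          rw [this]; exact norm_add_le _ _
      _ < δ' + α * δ' := by
          have h1 : ‖b - xb‖ < δ' := by
            have := hb.2; rwa [mem_ball, dist_eq_norm] at this
          have h2 : ‖x₂‖ < α * δ' := lt_of_lt_of_le hx₂ (by nlinarith)
          linarith
      _ = (1 + α) * δ' := by ring
      _ < δ := hsum
  have hkey := h xb (mem_ball_self hδ) y₁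
    (by rw [mem_ball, dist_zero_right]; exact hay) y₂
    (by rw [mem_ball, dist_zero_right]; exact hby)
  -- upper bound on RHS
  have hub1 : EMetric.infEdist xb ((· - y₁) '' A) ≤ ENNReal.ofReal ‖x₁‖ := by
    have hmem : xb - x₁ ∈ (· - y₁) '' A := ⟨a, ha.1, by rw [hy₁def]; abel⟩
    calc EMetric.infEdist xb ((· - y₁) '' A) ≤ edist xb (xb - x₁) :=
          EMetric.infEdist_le_edist_of_mem hmem
      _ = ENNReal.ofReal ‖x₁‖ := by
          rw [edist_dist, dist_eq_norm, show xb - (xb - x₁) = x₁ from _root_.sub_sub_cancel xb x₁]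
  have hub2 : EMetric.infEdist xb ((· - y₂) '' B) ≤ ENNReal.ofReal ‖x₂‖ := by
    have hmem : xb - x₂ ∈ (· - y₂) '' B := ⟨b, hb.1, by rw [hy₂def]; abel⟩
    calc EMetric.infEdist xb ((· - y₂) '' B) ≤ edist xb (xb - x₂) :=
          EMetric.infEdist_le_edist_of_mem hmem
      _ = ENNReal.ofReal ‖x₂‖ := by
          rw [edist_dist, dist_eq_norm, show xb - (xb - x₂) = x₂ from _root_.sub_sub_cancel xb x₂]
  have hlt : ENNReal.ofReal α * EMetric.infEdist xb (((· - y₁) '' A) ∩ ((· - y₂) '' B))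
      < ENNReal.ofReal α * ENNReal.ofReal ρ := by
    calc ENNReal.ofReal α * EMetric.infEdist xb (((· - y₁) '' A) ∩ ((· - y₂) '' B))
        ≤ max (EMetric.infEdist xb ((· - y₁) '' A)) (EMetric.infEdist xb ((· - y₂) '' B)) :=
          hkey
      _ ≤ ENNReal.ofReal (max ‖x₁‖ ‖x₂‖) := by
          apply max_le
          · exact hub1.trans (ENNReal.ofReal_le_ofReal (le_max_left _ _))
          · exact hub2.trans (ENNReal.ofReal_le_ofReal (le_max_right _ _))
      _ < ENNReal.ofReal (α * ρ) := by
          rw [ENNReal.ofReal_lt_ofReal_iff (by positivity)]; exact hx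
      _ = ENNReal.ofReal α * ENNReal.ofReal ρ := ENNReal.ofReal_mul hα.le
  have hαne : ENNReal.ofReal α ≠ 0 := by simp [ENNReal.ofReal_eq_zero]; linarith
  have hlt2 : EMetric.infEdist xb (((· - y₁) '' A) ∩ ((· - y₂) '' B)) < ENNReal.ofReal ρ :=
    lt_of_mul_lt_mul_left' hlt
  obtain ⟨z, hzmem, hzdist⟩ := EMetric.infEdist_lt_iff.mp hlt2
  refine ⟨z - xb, ⟨?_, ?_⟩, ?_⟩
  · obtain ⟨a'', ha''A, ha''⟩ := hzmem.1
    exact ⟨a'', ha''A, by simp only at ha'' ⊢; rw [← ha'', hy₁def]; abel⟩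
  · obtain ⟨b'', hb''B, hb''⟩ := hzmem.2
    exact ⟨b'', hb''B, by simp only at hb'' ⊢; rw [← hb'', hy₂def]; abel⟩
  · rw [mem_ball, dist_zero_right]
    have : dist z xb < ρ := by
      rw [← edist_lt_ofReal]; rwa [edist_comm] at hzdist
    rwa [← dist_eq_norm]

end Aux

section Aux2
variable {E : Type*} [NormedAddCommGroup E] [InnerProductSpace ℝ E] [FiniteDimensional ℝ E]

lemma trans_to_metric {A B : Set E} {xb : E} {α δ : ℝ} (hα : 0 < α) (hδ : 0 < δ)
    (hAc : IsClosed A) (hBc : IsClosed B) (hxb : xb ∈ A ∩ B)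
    (h : TransversalWith A B xb α δ) : MetricProp A B xb α (min (δ/8) (α*δ/8)) := by
  intro x hx x₁ hx₁ x₂ hx₂
  set δ' := min (δ/8) (α*δ/8) with hδ'def
  have hδ'1 : δ' ≤ δ/8 := min_le_left _ _
  have hδ'2 : δ' ≤ α*δ/8 := min_le_right _ _
  have hAne : A.Nonempty := ⟨xb, hxb.1⟩
  have hBne : B.Nonempty := ⟨xb, hxb.2⟩
  obtain ⟨a', ha'A, ha'⟩ := hAc.exists_infDist_eq_dist hAne (x + x₁)
  obtain ⟨b', hb'B, hb'⟩ := hBc.exists_infDist_eq_dist hBne (x + x₂)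
  set m₁ := Metric.infDist (x + x₁) A with hm₁
  set m₂ := Metric.infDist (x + x₂) B with hm₂
  set m := max m₁ m₂ with hm
  have hxd : dist x xb < δ' := mem_ball.mp hx
  have hx₁n : ‖x₁‖ < δ' := by have := mem_ball.mp hx₁; rwa [dist_zero_right] at this
  have hx₂n : ‖x₂‖ < δ' := by have := mem_ball.mp hx₂; rwa [dist_zero_right] at this
  have hm₁le : m₁ < 2 * δ' := by
    calc m₁ ≤ dist (x + x₁) xb := Metric.infDist_le_dist_of_mem hxb.1
      _ ≤ dist (x + x₁) x + dist x xb := dist_triangle _ _ _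
      _ < δ' + δ' := by
          have : dist (x + x₁) x = ‖x₁‖ := by rw [dist_eq_norm]; congr 1; abel
          rw [this]; exact add_lt_add hx₁n hxd
      _ = 2 * δ' := by ring
  have hm₂le : m₂ < 2 * δ' := by
    calc m₂ ≤ dist (x + x₂) xb := Metric.infDist_le_dist_of_mem hxb.2
      _ ≤ dist (x + x₂) x + dist x xb := dist_triangle _ _ _
      _ < δ' + δ' := by
          have : dist (x + x₂) x = ‖x₂‖ := by rw [dist_eq_norm]; congr 1; abel
          rw [this]; exact add_lt_add hx₂n hxd
      _ = 2 * δ' := by ring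
  have hmlt : m < 2 * δ' := max_lt hm₁le hm₂le
  have hm0 : 0 ≤ m := le_trans Metric.infDist_nonneg (le_max_left _ _)
  have ha'ball : a' ∈ Metric.ball xb δ := by
    rw [mem_ball]
    calc dist a' xb ≤ dist a' (x + x₁) + dist (x + x₁) xb := dist_triangle _ _ _
      _ < 2*δ' + 2*δ' := by
          refine add_lt_add_of_le_of_lt ?_ ?_
          · rw [dist_comm, ← ha']; linarith
          · calc dist (x + x₁) xb ≤ dist (x + x₁) x + dist x xb := dist_triangle _ _ _
              _ < 2*δ' := by
                  have : dist (x + x₁) x = ‖x₁‖ := by rw [dist_eq_norm]; congr 1; abel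
                  rw [this]; linarith
      _ ≤ δ/2 := by linarith
      _ < δ := by linarith
  have hb'ball : b' ∈ Metric.ball xb δ := by
    rw [mem_ball]
    calc dist b' xb ≤ dist b' (x + x₂) + dist (x + x₂) xb := dist_triangle _ _ _
      _ < 2*δ' + 2*δ' := by
          refine add_lt_add_of_le_of_lt ?_ ?_
          · rw [dist_comm, ← hb']; linarith
          · calc dist (x + x₂) xb ≤ dist (x + x₂) x + dist x xb := dist_triangle _ _ _
              _ < 2*δ' := by
                  have : dist (x + x₂) x = ‖x₂‖ := by rw [dist_eq_norm]; congr 1; abel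
                  rw [this]; linarith
      _ ≤ δ/2 := by linarith
      _ < δ := by linarith
  have hmαδ : m / α < δ / 4 := by
    rw [div_lt_iff₀ hα]
    have : 2 * δ' ≤ α * δ / 4 := by linarith
    calc m < 2 * δ' := hmlt
      _ ≤ α * δ / 4 := this
      _ = δ / 4 * α := by ring
  -- key estimate for each ρ in (m/α, δ)
  have key : ∀ ρ : ℝ, m / α < ρ → ρ < δ →
      EMetric.infEdist x (((· - x₁) '' A) ∩ ((· - x₂) '' B)) ≤ ENNReal.ofReal ρ := by
    intro ρ hρ1 hρ2
    have hρ0 : 0 < ρ := lt_of_le_of_lt (by positivity) hρ1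
    have hmρ : m < α * ρ := by rwa [div_lt_iff₀ hα, mul_comm] at hρ1
    have hy₁ : ‖x + x₁ - a'‖ = m₁ := by rw [ha', dist_eq_norm]
    have hy₂ : ‖x + x₂ - b'‖ = m₂ := by rw [hb', dist_eq_norm]
    have hmax : max ‖x + x₁ - a'‖ ‖x + x₂ - b'‖ < α * ρ := by
      rw [hy₁, hy₂]; exact lt_of_le_of_lt le_rfl (by rw [← hm] at *; exact hmρ)
    obtain ⟨z, ⟨⟨hzA, hzB⟩, hzball⟩⟩ :=
      h ρ ⟨hρ0, hρ2⟩ a' ⟨ha'A, ha'ball⟩ b' ⟨hb'B, hb'ball⟩ (x + x₁ - a') (x + x₂ - b') hmax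
    have hxz : x + z ∈ ((· - x₁) '' A) ∩ ((· - x₂) '' B) := by
      constructor
      · obtain ⟨a'', ha''A, ha''⟩ := hzA
        exact ⟨a'', ha''A, by simp only at ha'' ⊢; rw [← ha'']; abel⟩
      · obtain ⟨b'', hb''B, hb''⟩ := hzB
        exact ⟨b'', hb''B, by simp only at hb'' ⊢; rw [← hb'']; abel⟩
    calc EMetric.infEdist x (((· - x₁) '' A) ∩ ((· - x₂) '' B)) ≤ edist x (x + z) :=
          EMetric.infEdist_le_edist_of_mem hxz
      _ ≤ ENNReal.ofReal ρ := by
          rw [edist_dist]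
          apply ENNReal.ofReal_le_ofReal
          have : dist x (x + z) = ‖z‖ := by rw [dist_eq_norm, show x - (x + z) = -z by abel, norm_neg]
          rw [this]
          have := mem_ball.mp hzball
          rw [dist_zero_right] at this
          linarith
  have hinf : EMetric.infEdist x (((· - x₁) '' A) ∩ ((· - x₂) '' B)) ≤
      ENNReal.ofReal (m / α) := by
    by_contra hcon
    push_neg at hcon
    obtain ⟨r, hr0, hr1, hr2⟩ := ENNReal.lt_iff_exists_real_btwn.mp hcon
    have hmr : m / α < r := by
      by_contra hle
      push_neg at hle
      exact absurd hr1 (not_lt.mpr (ENNReal.ofReal_le_ofReal hle))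
    set ρ := min r ((m / α + δ) / 2) with hρdef
    have hρ1 : m / α < ρ := lt_min hmr (by linarith)
    have hρ2 : ρ < δ := lt_of_le_of_lt (min_le_right _ _) (by linarith)
    have := key ρ hρ1 hρ2
    have hle : ENNReal.ofReal ρ ≤ ENNReal.ofReal r :=
      ENNReal.ofReal_le_ofReal (min_le_left _ _)
    exact absurd (this.trans hle) (not_le.mpr hr2)
  -- conclude
  have hA' : EMetric.infEdist x ((· - x₁) '' A) = ENNReal.ofReal m₁ := by
    rw [infEdist_sub_image, hm₁, Metric.infDist,
      ENNReal.ofReal_toReal (Metric.infEdist_ne_top hAne)]; rfl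
  have hB' : EMetric.infEdist x ((· - x₂) '' B) = ENNReal.ofReal m₂ := by
    rw [infEdist_sub_image, hm₂, Metric.infDist,
      ENNReal.ofReal_toReal (Metric.infEdist_ne_top hBne)]; rfl
  calc ENNReal.ofReal α * EMetric.infEdist x (((· - x₁) '' A) ∩ ((· - x₂) '' B))
      ≤ ENNReal.ofReal α * ENNReal.ofReal (m / α) := by
        exact mul_le_mul_right hinf _
    _ = ENNReal.ofReal m := by
        rw [← ENNReal.ofReal_mul hα.le]
        congr 1
        field_simp
    _ = max (EMetric.infEdist x ((· - x₁) '' A)) (EMetric.infEdist x ((· - x₂) '' B)) := by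
        rw [hA', hB', hm]
        exact Monotone.map_max (fun _ _ hab => ENNReal.ofReal_le_ofReal hab)
end Aux2

theorem stmt9 (A B : Set E) (hA : IsClosed A) (hB : IsClosed B) (xb : E) (hxb : xb ∈ A ∩ B) :
    (Transversal A B xb ↔ ∃ δ > (0 : ℝ), ∃ α > (0 : ℝ), ∀ x ∈ Metric.ball xb δ,
        ∀ x₁ ∈ Metric.ball (0 : E) δ, ∀ x₂ ∈ Metric.ball (0 : E) δ,
          ENNReal.ofReal α * EMetric.infEdist x (((· - x₁) '' A) ∩ ((· - x₂) '' B)) ≤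
            max (EMetric.infEdist x ((· - x₁) '' A)) (EMetric.infEdist x ((· - x₂) '' B))) ∧
    rgColl A B xb =
      ⨆ α ∈ {α : ℝ | 0 < α ∧ ∃ δ > (0 : ℝ), ∀ x ∈ Metric.ball xb δ,
        ∀ x₁ ∈ Metric.ball (0 : E) δ, ∀ x₂ ∈ Metric.ball (0 : E) δ,
          ENNReal.ofReal α * EMetric.infEdist x (((· - x₁) '' A) ∩ ((· - x₂) '' B)) ≤
            max (EMetric.infEdist x ((· - x₁) '' A)) (EMetric.infEdist x ((· - x₂) '' B))},
        ENNReal.ofReal α := by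
  have key : ∀ α : ℝ, (0 < α ∧ ∃ δ > 0, TransversalWith A B xb α δ) ↔
      (0 < α ∧ ∃ δ > 0, MetricProp A B xb α δ) := by
    intro α
    constructor
    · rintro ⟨hα, δ, hδ, h⟩
      exact ⟨hα, min (δ/8) (α*δ/8), lt_min (by linarith) (by positivity),
        trans_to_metric hα hδ hA hB hxb h⟩
    · rintro ⟨hα, δ, hδ, h⟩
      have h1α : (0:ℝ) < 1 + α := by linarith
      exact ⟨hα, δ / (2 * (1 + α)), by positivity, metric_to_trans hα hδ h⟩
  constructor
  · constructor
    · rintro ⟨α, hα, δ, hδ, h⟩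
      obtain ⟨_, δ', hδ', h'⟩ := (key α).mp ⟨hα, δ, hδ, h⟩
      exact ⟨δ', hδ', α, hα, h'⟩
    · rintro ⟨δ, hδ, α, hα, h⟩
      obtain ⟨_, δ', hδ', h'⟩ := (key α).mpr ⟨hα, δ, hδ, h⟩
      exact ⟨α, hα, δ', hδ', h'⟩
  · have hset : {α : ℝ | 0 < α ∧ ∃ δ > 0, TransversalWith A B xb α δ} =
        {α : ℝ | 0 < α ∧ ∃ δ > (0 : ℝ), ∀ x ∈ Metric.ball xb δ,
          ∀ x₁ ∈ Metric.ball (0 : E) δ, ∀ x₂ ∈ Metric.ball (0 : E) δ,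
            ENNReal.ofReal α * EMetric.infEdist x (((· - x₁) '' A) ∩ ((· - x₂) '' B)) ≤
              max (EMetric.infEdist x ((· - x₁) '' A)) (EMetric.infEdist x ((· - x₂) '' B))} :=
      Set.ext key
    unfold rgColl
    rw [hset]


end Statements
end

section
/- Let A and B be closed subsets of a Euclidean space E and x̄ ∈ A ∩ B. The collection {A,B} is transversal at x̄ if and only if there exists a number α > 0 such that ‖v₁ + v₂‖ > α for all v₁ ∈ N_A(x̄) and v₂ ∈ N_B(x̄) with ‖v₁‖ + ‖v₂‖ = 1. Moreover, rg[A,B](x̄) equals the exact upper bound of all such numbers α. -/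
open Metric Set Pointwise Filter ENNReal
open scoped RealInnerProductSpace

section Statements

variable {E : Type*} [NormedAddCommGroup E] [InnerProductSpace ℝ E] [FiniteDimensional ℝ E]

set_option linter.unusedSectionVars false

lemma zero_mem_proxNC {A : Set E} {a : E} (ha : a ∈ A) : (0:E) ∈ proxNC A a :=
  ⟨0, le_refl 0, a, ⟨ha, by simp [Metric.infDist_zero_of_mem ha]⟩, by simp⟩

lemma zero_mem_limNC {A : Set E} {a : E} (ha : a ∈ A) : (0:E) ∈ limNC A a :=
  ⟨fun _ => a, fun _ => 0, fun _ => ha, fun _ => zero_mem_proxNC ha,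
    tendsto_const_nhds, tendsto_const_nhds⟩

lemma norm_add_le_smooth (w v : E) (hw : w ≠ 0) :
    ‖w + v‖ ≤ ‖w‖ + ⟪w, v⟫ / ‖w‖ + ‖v‖ ^ 2 / (2 * ‖w‖) := by
  have hw0 : (0:ℝ) < ‖w‖ := norm_pos_iff.mpr hw
  have hip : -(‖w‖ * ‖v‖) ≤ ⟪w, v⟫ := by
    have := abs_real_inner_le_norm w v; cases abs_le.mp this; linarith
  set X : ℝ := ⟪w, v⟫ / ‖w‖ + ‖v‖ ^ 2 / (2 * ‖w‖) with hX
  have h2X : 2 * ‖w‖ * X = 2 * ⟪w, v⟫ + ‖v‖ ^ 2 := by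
    rw [hX]; field_simp
  have hRnn : 0 ≤ ‖w‖ + X := by nlinarith [sq_nonneg (‖w‖ - ‖v‖)]
  have hexp : ‖w + v‖ ^ 2 = ‖w‖ ^ 2 + 2 * ⟪w, v⟫ + ‖v‖ ^ 2 := by
    rw [norm_add_sq_real]
  have hsq : ‖w + v‖ ^ 2 ≤ (‖w‖ + X) ^ 2 := by nlinarith [sq_nonneg X]
  have : ‖w + v‖ ≤ ‖w‖ + X := by
    nlinarith [norm_nonneg (w + v)]
  rw [hX] at this; linarith

lemma exists_convex_comb (n₁ n₂ : E) : ∃ μ : ℝ, 0 ≤ μ ∧ μ ≤ 1 ∧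
    (‖μ • n₁ + (1 - μ) • n₂‖ ^ 2 ≤ ⟪n₁, μ • n₁ + (1 - μ) • n₂⟫ ∧
     ‖μ • n₁ + (1 - μ) • n₂‖ ^ 2 ≤ ⟪n₂, μ • n₁ + (1 - μ) • n₂⟫) := by
  set d : ℝ := ‖n₁ - n₂‖ ^ 2 with hd
  set c : ℝ := ⟪n₂ - n₁, n₂⟫ with hc
  have key : ∀ μ : ℝ, 0 ≤ (1 - μ) * (μ * d - c) → μ * (μ * d - c) ≤ 0 →
      (‖μ • n₁ + (1 - μ) • n₂‖ ^ 2 ≤ ⟪n₁, μ • n₁ + (1 - μ) • n₂⟫ ∧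
       ‖μ • n₁ + (1 - μ) • n₂‖ ^ 2 ≤ ⟪n₂, μ • n₁ + (1 - μ) • n₂⟫) := by
    intro μ h1 h2
    set w := μ • n₁ + (1 - μ) • n₂ with hw
    have e1 : n₁ - w = (1 - μ) • (n₁ - n₂) := by rw [hw]; module
    have e2 : n₂ - w = (-μ) • (n₁ - n₂) := by rw [hw]; module
    have ew : ⟪n₁ - n₂, w⟫ = μ * d - c := by
      rw [hw, hd, hc, ← real_inner_self_eq_norm_sq]
      simp only [inner_add_right, inner_sub_left, inner_sub_right, real_inner_smul_right]
      rw [real_inner_comm n₂ n₁]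
      ring
    have g1 : ⟪n₁, w⟫ - ‖w‖ ^ 2 = (1 - μ) * ⟪n₁ - n₂, w⟫ := by
      rw [← real_inner_smul_left, ← e1, inner_sub_left, real_inner_self_eq_norm_sq]
    have g2 : ⟪n₂, w⟫ - ‖w‖ ^ 2 = (-μ) * ⟪n₁ - n₂, w⟫ := by
      rw [← real_inner_smul_left, ← e2, inner_sub_left, real_inner_self_eq_norm_sq]
    rw [ew] at g1 g2
    constructor <;> nlinarith
  by_cases hd0 : d = 0
  · have hn : n₁ - n₂ = 0 := by
      rw [← norm_eq_zero]
      have : ‖n₁ - n₂‖ ^ 2 = 0 := hd ▸ hd0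
      nlinarith [norm_nonneg (n₁ - n₂)]
    have hc0 : c = 0 := by rw [hc, ← neg_sub n₁ n₂, hn, neg_zero, inner_zero_left]
    exact ⟨0, le_refl 0, zero_le_one, key 0 (by rw [hc0]; simp) (by simp)⟩
  · have hdpos : 0 < d := lt_of_le_of_ne (hd ▸ sq_nonneg _) (Ne.symm hd0)
    rcases le_or_gt (c / d) 0 with hle | hgt
    · have hcle : c ≤ 0 := by
        have := mul_le_mul_of_nonneg_right hle (le_of_lt hdpos)
        rw [div_mul_cancel₀ _ hd0] at this; linarith
      exact ⟨0, le_refl 0, zero_le_one, key 0 (by nlinarith) (by simp)⟩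
    · rcases le_or_gt 1 (c / d) with hge | hlt
      · have hcge : d ≤ c := by
          have := mul_le_mul_of_nonneg_right hge (le_of_lt hdpos)
          rw [div_mul_cancel₀ _ hd0] at this; linarith
        exact ⟨1, zero_le_one, le_refl 1, key 1 (by norm_num) (by nlinarith)⟩
      · refine ⟨c / d, le_of_lt hgt, le_of_lt hlt, key (c / d) ?_ ?_⟩
        · rw [div_mul_cancel₀ _ hd0]; simp
        · rw [div_mul_cancel₀ _ hd0]; simp


lemma strict_aux (C₁ C₂ : Set E) (f : E → ℝ) (β ρ : ℝ) (u0 s₁ s₂ z : E)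
    (hβ1 : β < 1) (hzC : z ∈ C₂)
    (hfeq : ∀ u, f u = max (infDist (u + s₁) C₁) (infDist (u + s₂) C₂))
    (hr0 : 0 < f u0) (hu0ρ : ‖u0‖ < ρ)
    (hlocmin : ∀ u ∈ Metric.closedBall (0:E) ρ, f u0 ≤ f u + β * ‖u - u0‖)
    (hlt : infDist (u0 + s₁) C₁ < f u0) (hdist : dist (u0 + s₂) z = f u0) : False := by
  obtain ⟨t, ht⟩ : ∃ t : ℝ, t = min ((f u0 - infDist (u0 + s₁) C₁) / 2) (min (f u0) (ρ - ‖u0‖)) :=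
    ⟨_, rfl⟩
  have ht0 : 0 < t := by rw [ht]; exact lt_min (by linarith) (lt_min hr0 (by linarith))
  have htr : t ≤ f u0 := ht ▸ le_trans (min_le_right _ _) (min_le_left _ _)
  have htρ : t ≤ ρ - ‖u0‖ := ht ▸ le_trans (min_le_right _ _) (min_le_right _ _)
  have ht2 : t ≤ (f u0 - infDist (u0 + s₁) C₁) / 2 := ht ▸ min_le_left _ _
  obtain ⟨w, hw⟩ : ∃ w : E, w = z - (u0 + s₂) := ⟨_, rfl⟩
  have hwn : ‖w‖ = f u0 := by rw [hw, ← hdist, dist_eq_norm, norm_sub_rev]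
  obtain ⟨u, hu⟩ : ∃ u : E, u = u0 + (t / f u0) • w := ⟨_, rfl⟩
  have huu0 : u - u0 = (t / f u0) • w := by rw [hu]; abel
  have huu0n : ‖u - u0‖ = t := by
    rw [huu0, norm_smul, hwn, Real.norm_eq_abs,
      abs_of_nonneg (div_nonneg (le_of_lt ht0) (le_of_lt hr0)),
      div_mul_cancel₀ _ (ne_of_gt hr0)]
  have huball : u ∈ Metric.closedBall (0:E) ρ := by
    rw [Metric.mem_closedBall, dist_zero_right]
    calc ‖u‖ = ‖u0 + (u - u0)‖ := by congr 1; abel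
      _ ≤ ‖u0‖ + ‖u - u0‖ := norm_add_le _ _
      _ = ‖u0‖ + t := by rw [huu0n]
      _ ≤ ρ := by linarith
  have b1 : infDist (u + s₁) C₁ ≤ infDist (u0 + s₁) C₁ + t := by
    calc infDist (u + s₁) C₁ ≤ infDist (u0 + s₁) C₁ + dist (u + s₁) (u0 + s₁) :=
          Metric.infDist_le_infDist_add_dist
      _ = infDist (u0 + s₁) C₁ + t := by
          rw [dist_eq_norm, show u + s₁ - (u0 + s₁) = u - u0 by abel, huu0n]
  have b2 : infDist (u + s₂) C₂ ≤ f u0 - t := by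
    have h1 : t / f u0 ≤ 1 := by rw [div_le_one hr0]; exact htr
    calc infDist (u + s₂) C₂ ≤ dist (u + s₂) z := Metric.infDist_le_dist_of_mem hzC
      _ = ‖(t / f u0 - 1) • w‖ := by
          rw [dist_eq_norm]; congr 1; rw [hu, hw]; module
      _ = (1 - t / f u0) * ‖w‖ := by
          rw [norm_smul, Real.norm_eq_abs, abs_of_nonpos (by linarith)]; ring
      _ = f u0 - t := by rw [hwn]; field_simp
  have hfu : f u ≤ f u0 - t := by
    rw [hfeq u]; exact max_le (by linarith) b2
  have := hlocmin u huball
  rw [huu0n] at this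
  nlinarith

lemma dir_aux (C₁ C₂ : Set E) (f : E → ℝ) (β ρ : ℝ) (u0 s₁ s₂ yA zB : E)
    (hyC : yA ∈ C₁) (hzC : zB ∈ C₂)
    (hfeq : ∀ u, f u = max (infDist (u + s₁) C₁) (infDist (u + s₂) C₂))
    (hr0 : 0 < f u0) (hu0ρ : ‖u0‖ < ρ)
    (hlocmin : ∀ u ∈ Metric.closedBall (0:E) ρ, f u0 ≤ f u + β * ‖u - u0‖)
    (hyd : dist (u0 + s₁) yA = f u0) (hzd : dist (u0 + s₂) zB = f u0)
    (h : E) :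
    -(β * ‖h‖) ≤ max ⟪(f u0)⁻¹ • (u0 + s₁ - yA), h⟫ ⟪(f u0)⁻¹ • (u0 + s₂ - zB), h⟫ := by
  by_contra hcon
  push_neg at hcon
  obtain ⟨M, hM⟩ : ∃ M : ℝ,
      M = max ⟪(f u0)⁻¹ • (u0 + s₁ - yA), h⟫ ⟪(f u0)⁻¹ • (u0 + s₂ - zB), h⟫ := ⟨_, rfl⟩
  rw [← hM] at hcon
  obtain ⟨c, hc⟩ : ∃ c : ℝ, c = ‖h‖ ^ 2 / (2 * f u0) := ⟨_, rfl⟩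
  have hc0 : 0 ≤ c := by rw [hc]; positivity
  obtain ⟨ε, hε⟩ : ∃ ε : ℝ, ε = -(β * ‖h‖) - M := ⟨_, rfl⟩
  have hε0 : 0 < ε := by rw [hε]; linarith
  obtain ⟨t, ht⟩ : ∃ t : ℝ, t = min ((ρ - ‖u0‖) / (‖h‖ + 1)) (ε / (c + 1)) := ⟨_, rfl⟩
  have hh1 : (0:ℝ) < ‖h‖ + 1 := by positivity
  have ht0 : 0 < t := by
    rw [ht]; exact lt_min (div_pos (by linarith) hh1) (div_pos hε0 (by positivity))
  have ht1 : t ≤ (ρ - ‖u0‖) / (‖h‖ + 1) := ht ▸ min_le_left _ _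
  have ht2 : t ≤ ε / (c + 1) := ht ▸ min_le_right _ _
  obtain ⟨u, hu⟩ : ∃ u : E, u = u0 + t • h := ⟨_, rfl⟩
  have huu0 : u - u0 = t • h := by rw [hu]; abel
  have huu0n : ‖u - u0‖ = t * ‖h‖ := by
    rw [huu0, norm_smul, Real.norm_eq_abs, abs_of_pos ht0]
  have huball : u ∈ Metric.closedBall (0:E) ρ := by
    rw [Metric.mem_closedBall, dist_zero_right]
    have h2 : t * (‖h‖ + 1) ≤ ρ - ‖u0‖ := by
      rw [← div_mul_cancel₀ (ρ - ‖u0‖) (ne_of_gt hh1)]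
      exact mul_le_mul_of_nonneg_right ht1 (le_of_lt hh1)
    calc ‖u‖ = ‖u0 + (u - u0)‖ := by congr 1; abel
      _ ≤ ‖u0‖ + ‖u - u0‖ := norm_add_le _ _
      _ = ‖u0‖ + t * ‖h‖ := by rw [huu0n]
      _ ≤ ρ := by nlinarith
  have keybound : ∀ (s : E) (C : Set E) (y : E), y ∈ C → dist (u0 + s) y = f u0 →
      infDist (u + s) C ≤ f u0 + t * ⟪(f u0)⁻¹ • (u0 + s - y), h⟫ + t ^ 2 * c := by
    intro s C y hyCmem hyd'
    have hwn : ‖u0 + s - y‖ = f u0 := by rw [← hyd', dist_eq_norm]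
    have hwne : u0 + s - y ≠ 0 := by
      intro hh; rw [hh, norm_zero] at hwn; linarith
    calc infDist (u + s) C ≤ dist (u + s) y := Metric.infDist_le_dist_of_mem hyCmem
      _ = ‖(u0 + s - y) + t • h‖ := by rw [dist_eq_norm]; congr 1; rw [hu]; abel
      _ ≤ ‖u0 + s - y‖ + ⟪u0 + s - y, t • h⟫ / ‖u0 + s - y‖
            + ‖t • h‖ ^ 2 / (2 * ‖u0 + s - y‖) := norm_add_le_smooth _ _ hwne
      _ = f u0 + t * ⟪(f u0)⁻¹ • (u0 + s - y), h⟫ + t ^ 2 * c := by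
          rw [hwn, real_inner_smul_left, real_inner_smul_right, norm_smul, Real.norm_eq_abs,
            abs_of_pos ht0, hc]
          field_simp [ne_of_gt hr0]
  have hfub : f u ≤ f u0 + t * M + t ^ 2 * c := by
    rw [hfeq u]
    apply max_le
    · have := keybound s₁ C₁ yA hyC hyd
      have hM1 : ⟪(f u0)⁻¹ • (u0 + s₁ - yA), h⟫ ≤ M := hM ▸ le_max_left _ _
      nlinarith
    · have := keybound s₂ C₂ zB hzC hzd
      have hM2 : ⟪(f u0)⁻¹ • (u0 + s₂ - zB), h⟫ ≤ M := hM ▸ le_max_right _ _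
      nlinarith
  have hlm := hlocmin u huball
  rw [huu0n] at hlm
  have h5 : 0 ≤ M + t * c + β * ‖h‖ := by nlinarith
  have h6 : t * (c + 1) ≤ ε := by
    rw [← div_mul_cancel₀ ε (by positivity : c + 1 ≠ 0)]
    exact mul_le_mul_of_nonneg_right ht2 (by positivity)
  nlinarith

set_option maxHeartbeats 1000000 in
lemma core_construction (A B : Set E) (hA : IsClosed A) (hB : IsClosed B) (xb : E)
    (hxbA : xb ∈ A) (hxbB : xb ∈ B) (β δ : ℝ) (hβ0 : 0 < β) (hβ1 : β < 1) (hδ : 0 < δ)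
    (hfail : ¬ TransversalWith A B xb β δ) :
    ∃ a ∈ A ∩ Metric.ball xb (4 * δ), ∃ b ∈ B ∩ Metric.ball xb (4 * δ),
      ∃ w₁ ∈ proxNC A a, ∃ w₂ ∈ proxNC B b, ‖w₁‖ + ‖w₂‖ = 1 ∧ ‖w₁ + w₂‖ ≤ β := by
  unfold TransversalWith at hfail
  push_neg at hfail
  obtain ⟨ρ, hρ, a, ha, b, hb, x₁, x₂, hx, hne⟩ := hfail
  obtain ⟨hρ0, hρδ⟩ := hρ
  obtain ⟨p, hp⟩ : ∃ p : E, p = a + x₁ := ⟨_, rfl⟩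
  obtain ⟨q, hq⟩ : ∃ q : E, q = b + x₂ := ⟨_, rfl⟩
  have Hempty : ∀ u : E, ‖u‖ < ρ → u + p ∈ A → u + q ∈ B → False := by
    intro u hu huA huB
    rw [Set.eq_empty_iff_forall_notMem] at hne
    refine hne u ⟨⟨⟨u + p, huA, by rw [hp]; abel_nf⟩, ⟨u + q, huB, by rw [hq]; abel_nf⟩⟩, ?_⟩
    simpa [Metric.mem_ball, dist_eq_norm] using hu
  have hx1 : ‖x₁‖ < β * ρ := lt_of_le_of_lt (le_max_left _ _) hx
  have hx2 : ‖x₂‖ < β * ρ := lt_of_le_of_lt (le_max_right _ _) hx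
  obtain ⟨f, hfeqpq⟩ : ∃ f : E → ℝ, ∀ u, f u = max (infDist (u + p) A) (infDist (u + q) B) :=
    ⟨_, fun _ => rfl⟩
  have hf : f = fun u => max (infDist (u + p) A) (infDist (u + q) B) := funext hfeqpq
  have hcont : Continuous f := by
    rw [hf]
    apply Continuous.max
    · exact (continuous_infDist_pt A).comp (continuous_id.add continuous_const)
    · exact (continuous_infDist_pt B).comp (continuous_id.add continuous_const)
  have hfnn : ∀ u, 0 ≤ f u := fun u =>
    (hfeqpq u) ▸ le_trans Metric.infDist_nonneg (le_max_left _ _)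
  have hf0 : f 0 < β * ρ := by
    rw [hfeqpq 0]
    apply max_lt
    · calc infDist (0 + p) A ≤ dist (0 + p) a := Metric.infDist_le_dist_of_mem ha.1
        _ = ‖x₁‖ := by rw [dist_eq_norm]; congr 1; rw [hp]; abel
        _ < β * ρ := hx1
    · calc infDist (0 + q) B ≤ dist (0 + q) b := Metric.infDist_le_dist_of_mem hb.1
        _ = ‖x₂‖ := by rw [dist_eq_norm]; congr 1; rw [hq]; abel
        _ < β * ρ := hx2
  -- minimize f + β‖·‖ over the closed ball
  obtain ⟨u0, hu0mem, hu0min⟩ := (isCompact_closedBall (0:E) ρ).exists_isMinOn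
    ⟨0, Metric.mem_closedBall_self (le_of_lt hρ0)⟩
    (Continuous.continuousOn (hcont.add (continuous_norm.const_smul β)))
  have hminle : ∀ u ∈ Metric.closedBall (0:E) ρ, f u0 + β * ‖u0‖ ≤ f u + β * ‖u‖ := by
    intro u hu
    have := hu0min hu
    simpa [smul_eq_mul] using this
  have h0ball : (0:E) ∈ Metric.closedBall (0:E) ρ := Metric.mem_closedBall_self (le_of_lt hρ0)
  have hfu0 : f u0 + β * ‖u0‖ ≤ f 0 := by simpa using hminle 0 h0ball
  have hu0ρ : ‖u0‖ < ρ := by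
    have h1 : β * ‖u0‖ ≤ f 0 := le_trans (by linarith [hfnn u0]) hfu0
    by_contra hcon
    push_neg at hcon
    have : β * ρ ≤ β * ‖u0‖ := by nlinarith
    linarith [hf0]
  have hr0 : 0 < f u0 := by
    rcases lt_or_ge 0 (f u0) with h | h
    · exact h
    · exfalso
      have h1 : infDist (u0 + p) A = 0 :=
        le_antisymm (by rw [hfeqpq u0] at h; exact le_trans (le_max_left _ _) h)
          Metric.infDist_nonneg
      have h2 : infDist (u0 + q) B = 0 :=
        le_antisymm (by rw [hfeqpq u0] at h; exact le_trans (le_max_right _ _) h)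
          Metric.infDist_nonneg
      exact Hempty u0 hu0ρ ((hA.mem_iff_infDist_zero ⟨xb, hxbA⟩).mpr h1)
        ((hB.mem_iff_infDist_zero ⟨xb, hxbB⟩).mpr h2)
  have hlocmin : ∀ u ∈ Metric.closedBall (0:E) ρ, f u0 ≤ f u + β * ‖u - u0‖ := by
    intro u hu
    have h1 := hminle u hu
    have h2 : ‖u‖ ≤ ‖u - u0‖ + ‖u0‖ := by
      calc ‖u‖ = ‖(u - u0) + u0‖ := by congr 1; abel
        _ ≤ ‖u - u0‖ + ‖u0‖ := norm_add_le _ _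
    nlinarith
  -- projections
  obtain ⟨yA, hyAA, hyAd⟩ := hA.exists_infDist_eq_dist ⟨xb, hxbA⟩ (u0 + p)
  obtain ⟨zB, hzBB, hzBd⟩ := hB.exists_infDist_eq_dist ⟨xb, hxbB⟩ (u0 + q)
  have hfu0eq : f u0 = max (infDist (u0 + p) A) (infDist (u0 + q) B) := hfeqpq u0
  -- rule out the strict cases
  have hfeqqp : ∀ u, f u = max (infDist (u + q) B) (infDist (u + p) A) := fun u =>
    (hfeqpq u).trans (max_comm _ _)
  have hrA : infDist (u0 + p) A = f u0 := by
    rcases lt_or_ge (infDist (u0 + p) A) (f u0) with hlt | hge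
    · exfalso
      have hqd : dist (u0 + q) zB = f u0 := by
        rw [← hzBd]
        rcases max_cases (infDist (u0 + p) A) (infDist (u0 + q) B) with ⟨h1, h2⟩ | ⟨h1, h2⟩
        · rw [hfu0eq, h1] at hlt; linarith
        · rw [hfu0eq, h1]
      exact strict_aux A B f β ρ u0 p q zB hβ1 hzBB hfeqpq hr0 hu0ρ hlocmin hlt hqd
    · exact le_antisymm (le_trans (le_max_left _ _) (le_of_eq hfu0eq.symm)) hge
  have hrB : infDist (u0 + q) B = f u0 := by
    rcases lt_or_ge (infDist (u0 + q) B) (f u0) with hlt | hge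
    · exfalso
      have hpd : dist (u0 + p) yA = f u0 := by rw [← hyAd, ← hrA]
      exact strict_aux B A f β ρ u0 q p yA hβ1 hyAA hfeqqp hr0 hu0ρ hlocmin hlt hpd
    · exact le_antisymm (le_trans (le_max_right _ _) (le_of_eq hfu0eq.symm)) hge
  have hyd : dist (u0 + p) yA = f u0 := by rw [← hyAd, hrA]
  have hzd : dist (u0 + q) zB = f u0 := by rw [← hzBd, hrB]
  -- unit proximal normals
  obtain ⟨n₁, hn₁⟩ : ∃ n : E, n = (f u0)⁻¹ • (u0 + p - yA) := ⟨_, rfl⟩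
  obtain ⟨n₂, hn₂⟩ : ∃ n : E, n = (f u0)⁻¹ • (u0 + q - zB) := ⟨_, rfl⟩
  have hyn : ‖u0 + p - yA‖ = f u0 := by rw [← hyd, dist_eq_norm]
  have hzn : ‖u0 + q - zB‖ = f u0 := by rw [← hzd, dist_eq_norm]
  have hn₁n : ‖n₁‖ = 1 := by
    rw [hn₁, norm_smul, Real.norm_eq_abs, abs_of_pos (by positivity), hyn,
      inv_mul_cancel₀ (ne_of_gt hr0)]
  have hn₂n : ‖n₂‖ = 1 := by
    rw [hn₂, norm_smul, Real.norm_eq_abs, abs_of_pos (by positivity), hzn,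
      inv_mul_cancel₀ (ne_of_gt hr0)]
  have hdir : ∀ h : E, -(β * ‖h‖) ≤ max ⟪n₁, h⟫ ⟪n₂, h⟫ := by
    intro h
    rw [hn₁, hn₂]
    exact dir_aux A B f β ρ u0 p q yA zB hyAA hzBB hfeqpq hr0 hu0ρ hlocmin hyd hzd h
  -- convex combination
  obtain ⟨μ, hμ0, hμ1, hw1, hw2⟩ := exists_convex_comb n₁ n₂
  obtain ⟨w, hwdef⟩ : ∃ w : E, w = μ • n₁ + (1 - μ) • n₂ := ⟨_, rfl⟩
  rw [← hwdef] at hw1 hw2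
  have hwβ : ‖w‖ ≤ β := by
    rcases eq_or_ne w 0 with h0 | h0
    · rw [h0, norm_zero]; linarith
    · have := hdir (-w)
      rw [inner_neg_right, inner_neg_right, norm_neg] at this
      rcases le_max_iff.mp this with h | h
      · have h1 : ⟪n₁, w⟫ ≤ β * ‖w‖ := by linarith
        have hwpos : 0 < ‖w‖ := norm_pos_iff.mpr h0
        refine le_of_mul_le_mul_right ?_ hwpos
        calc ‖w‖ * ‖w‖ = ‖w‖ ^ 2 := (sq ‖w‖).symm
          _ ≤ ⟪n₁, w⟫ := hw1
          _ ≤ β * ‖w‖ := h1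
      · have h1 : ⟪n₂, w⟫ ≤ β * ‖w‖ := by linarith
        have hwpos : 0 < ‖w‖ := norm_pos_iff.mpr h0
        refine le_of_mul_le_mul_right ?_ hwpos
        calc ‖w‖ * ‖w‖ = ‖w‖ ^ 2 := (sq ‖w‖).symm
          _ ≤ ⟪n₂, w⟫ := hw2
          _ ≤ β * ‖w‖ := h1
  -- package the result
  have hwnorm : ‖μ • n₁‖ + ‖(1 - μ) • n₂‖ = 1 := by
    rw [norm_smul, norm_smul, Real.norm_eq_abs, Real.norm_eq_abs, abs_of_nonneg hμ0,
      abs_of_nonneg (by linarith), hn₁n, hn₂n]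
    ring
  have hyA4 : yA ∈ Metric.ball xb (4 * δ) := by
    rw [Metric.mem_ball, dist_eq_norm]
    have e1 : yA - xb = -(u0 + p - yA) + u0 + x₁ + (a - xb) := by rw [hp]; abel
    have h2 : ‖a - xb‖ < δ := by rw [← dist_eq_norm]; exact ha.2
    calc ‖yA - xb‖ = ‖-(u0 + p - yA) + u0 + x₁ + (a - xb)‖ := by rw [e1]
      _ ≤ ‖-(u0 + p - yA) + u0 + x₁‖ + ‖a - xb‖ := norm_add_le _ _
      _ ≤ ‖-(u0 + p - yA) + u0‖ + ‖x₁‖ + ‖a - xb‖ := by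
          linarith [norm_add_le (-(u0 + p - yA) + u0) x₁]
      _ ≤ ‖-(u0 + p - yA)‖ + ‖u0‖ + ‖x₁‖ + ‖a - xb‖ := by
          linarith [norm_add_le (-(u0 + p - yA)) u0]
      _ < 4 * δ := by
          rw [norm_neg, hyn]
          have hfr : f u0 < β * ρ := by
            have := hfu0
            nlinarith [norm_nonneg u0, hf0]
          have hβρ : β * ρ < ρ := by nlinarith
          linarith
  have hzB4 : zB ∈ Metric.ball xb (4 * δ) := by
    rw [Metric.mem_ball, dist_eq_norm]
    have e1 : zB - xb = -(u0 + q - zB) + u0 + x₂ + (b - xb) := by rw [hq]; abel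
    have h2 : ‖b - xb‖ < δ := by rw [← dist_eq_norm]; exact hb.2
    calc ‖zB - xb‖ = ‖-(u0 + q - zB) + u0 + x₂ + (b - xb)‖ := by rw [e1]
      _ ≤ ‖-(u0 + q - zB) + u0 + x₂‖ + ‖b - xb‖ := norm_add_le _ _
      _ ≤ ‖-(u0 + q - zB) + u0‖ + ‖x₂‖ + ‖b - xb‖ := by
          linarith [norm_add_le (-(u0 + q - zB) + u0) x₂]
      _ ≤ ‖-(u0 + q - zB)‖ + ‖u0‖ + ‖x₂‖ + ‖b - xb‖ := by
          linarith [norm_add_le (-(u0 + q - zB)) u0]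
      _ < 4 * δ := by
          rw [norm_neg, hzn]
          have hfr : f u0 < β * ρ := by
            have := hfu0
            nlinarith [norm_nonneg u0, hf0]
          have hβρ : β * ρ < ρ := by nlinarith
          linarith
  refine ⟨yA, ⟨hyAA, hyA4⟩, zB, ⟨hzBB, hzB4⟩, μ • n₁, ?_, (1 - μ) • n₂, ?_, hwnorm, ?_⟩
  · refine ⟨μ * (f u0)⁻¹, mul_nonneg hμ0 (le_of_lt (inv_pos.mpr hr0)), u0 + p, ⟨hyAA, ?_⟩, ?_⟩
    · rw [hyAd, dist_eq_norm]
    · rw [hn₁, smul_smul]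
  · refine ⟨(1 - μ) * (f u0)⁻¹, mul_nonneg (by linarith) (le_of_lt (inv_pos.mpr hr0)), u0 + q, ⟨hzBB, ?_⟩, ?_⟩
    · rw [hzBd, dist_eq_norm]
    · rw [hn₂, smul_smul]
  · exact hwdef ▸ hwβ

lemma dual_implies_trans (A B : Set E) (hA : IsClosed A) (hB : IsClosed B) (xb : E)
    (hxbA : xb ∈ A) (hxbB : xb ∈ B) (β : ℝ) (hβ0 : 0 < β) (hβ1 : β < 1)
    (hdual : ∀ v₁ ∈ limNC A xb, ∀ v₂ ∈ limNC B xb, ‖v₁‖ + ‖v₂‖ = 1 → β < ‖v₁ + v₂‖) :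
    ∃ δ > (0:ℝ), TransversalWith A B xb β δ := by
  by_contra hcon
  push_neg at hcon
  have H : ∀ k : ℕ, ∃ a, (a ∈ A ∩ Metric.ball xb (4 * (1 / (k + 1)))) ∧
      ∃ b, (b ∈ B ∩ Metric.ball xb (4 * (1 / (k + 1)))) ∧
      ∃ w₁, w₁ ∈ proxNC A a ∧ ∃ w₂, w₂ ∈ proxNC B b ∧ ‖w₁‖ + ‖w₂‖ = 1 ∧ ‖w₁ + w₂‖ ≤ β := by
    intro k
    have hδk : (0:ℝ) < 1 / (k + 1) := by positivity
    obtain ⟨a, ha, b, hb, w₁, hw₁, w₂, hw₂, hns, hsb⟩ :=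
      core_construction A B hA hB xb hxbA hxbB β (1 / (k + 1)) hβ0 hβ1 hδk (hcon _ hδk)
    exact ⟨a, ha, b, hb, w₁, hw₁, w₂, hw₂, hns, hsb⟩
  choose a ha b hb w₁ hw₁ w₂ hw₂ hns hsb using H
  -- extract convergent subsequences of the normals
  have hwball : ∀ k, (w₁ k, w₂ k) ∈
      (Metric.closedBall (0:E) 1) ×ˢ (Metric.closedBall (0:E) 1) := by
    intro k
    constructor <;> rw [Metric.mem_closedBall, dist_zero_right]
    · linarith [hns k, norm_nonneg (w₂ k)]
    · linarith [hns k, norm_nonneg (w₁ k)]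
  obtain ⟨⟨v₁, v₂⟩, _, φ, hφ, hφtendsto⟩ :=
    ((isCompact_closedBall (0:E) 1).prod (isCompact_closedBall (0:E) 1)).tendsto_subseq hwball
  rw [Prod.tendsto_iff] at hφtendsto
  obtain ⟨ht1, ht2⟩ := hφtendsto
  -- a ∘ φ and b ∘ φ tend to xb
  have hdistbound : ∀ (c : ℕ → E), (∀ k : ℕ, c k ∈ Metric.ball xb (4 * (1 / ((k:ℝ) + 1)))) →
      Tendsto (c ∘ φ) atTop (nhds xb) := by
    intro c hc
    rw [tendsto_iff_dist_tendsto_zero]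
    apply squeeze_zero (fun k => dist_nonneg) (g := fun k : ℕ => 4 * (1 / ((k:ℝ) + 1)))
    · intro k
      have h1 : dist (c (φ k)) xb < 4 * (1 / (φ k + 1)) := by
        have := hc (φ k); rwa [Metric.mem_ball] at this
      have h2 : (4:ℝ) * (1 / (φ k + 1)) ≤ 4 * (1 / (k + 1)) := by
        have hk : (k:ℝ) + 1 ≤ (φ k : ℝ) + 1 := by
          have h := hφ.le_apply (x := k)
          have h2 : (k:ℝ) ≤ (φ k : ℝ) := by exact_mod_cast h
          linarith
        have : (0:ℝ) < (k:ℝ) + 1 := by positivity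
        have : (1:ℝ) / (φ k + 1) ≤ 1 / (k + 1) := by
          apply one_div_le_one_div_of_le this hk
        linarith
      exact le_of_lt (lt_of_lt_of_le h1 h2)
    · have := (tendsto_one_div_add_atTop_nhds_zero_nat : Tendsto (fun n : ℕ => 1 / ((n : ℝ) + 1)) atTop (nhds 0))
      have h4 := this.const_mul (4:ℝ)
      simpa using h4
  have hv₁ : v₁ ∈ limNC A xb :=
    ⟨a ∘ φ, w₁ ∘ φ, fun k => (ha (φ k)).1, fun k => hw₁ (φ k),
      hdistbound a (fun k => (ha k).2), ht1⟩
  have hv₂ : v₂ ∈ limNC B xb :=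
    ⟨b ∘ φ, w₂ ∘ φ, fun k => (hb (φ k)).1, fun k => hw₂ (φ k),
      hdistbound b (fun k => (hb k).2), ht2⟩
  have hsum1 : ‖v₁‖ + ‖v₂‖ = 1 := by
    have h1 : Tendsto (fun k => ‖w₁ (φ k)‖ + ‖w₂ (φ k)‖) atTop (nhds (‖v₁‖ + ‖v₂‖)) :=
      (ht1.norm).add (ht2.norm)
    have h2 : Tendsto (fun k => ‖w₁ (φ k)‖ + ‖w₂ (φ k)‖) atTop (nhds 1) := by
      have : (fun k => ‖w₁ (φ k)‖ + ‖w₂ (φ k)‖) = fun _ => (1:ℝ) := funext fun k => hns (φ k)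
      rw [this]; exact tendsto_const_nhds
    exact tendsto_nhds_unique h1 h2
  have hsumβ : ‖v₁ + v₂‖ ≤ β := by
    have h1 : Tendsto (fun k => ‖w₁ (φ k) + w₂ (φ k)‖) atTop (nhds ‖v₁ + v₂‖) :=
      (ht1.add ht2).norm
    exact le_of_tendsto h1 (Filter.Eventually.of_forall fun k => hsb (φ k))
  exact absurd (hdual v₁ hv₁ v₂ hv₂ hsum1) (not_lt.mpr hsumβ)

lemma proxNC_inner_le {A : Set E} {a : E} {v : E} (hv : v ∈ proxNC A a) :
    ∃ lam : ℝ, 0 ≤ lam ∧ ∀ w ∈ A, ⟪v, w - a⟫ ≤ lam / 2 * ‖w - a‖ ^ 2 := by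
  obtain ⟨lam, hlam, x, ⟨hxA, hxd⟩, rfl⟩ := hv
  refine ⟨lam, hlam, fun w hw => ?_⟩
  have h1 : ‖x - a‖ ≤ ‖x - w‖ := by
    rw [hxd, ← dist_eq_norm]; exact Metric.infDist_le_dist_of_mem hw
  have h2 : ‖x - w‖ ^ 2 = ‖x - a‖ ^ 2 - 2 * ⟪x - a, w - a⟫ + ‖w - a‖ ^ 2 := by
    have : x - w = (x - a) - (w - a) := by abel
    rw [this, norm_sub_sq_real]
  have h3 : ⟪x - a, w - a⟫ ≤ ‖w - a‖ ^ 2 / 2 := by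
    nlinarith [norm_nonneg (x - a), norm_nonneg (x - w)]
  rw [real_inner_smul_left]
  nlinarith

lemma smul_mem_proxNC {A : Set E} {a : E} {v : E} (hv : v ∈ proxNC A a) {c : ℝ} (hc : 0 ≤ c) :
    c • v ∈ proxNC A a := by
  obtain ⟨lam, hlam, x, hx, rfl⟩ := hv
  exact ⟨c * lam, mul_nonneg hc hlam, x, hx, by rw [smul_smul]⟩

set_option maxHeartbeats 1000000 in
lemma trans_implies_dual_prox (A B : Set E) (xb : E) (α δ : ℝ) (hα : 0 < α) (hδ : 0 < δ)
    (htrans : TransversalWith A B xb α δ) {a b : E} (haA : a ∈ A)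
    (haball : a ∈ Metric.ball xb δ) (hbB : b ∈ B) (hbball : b ∈ Metric.ball xb δ)
    {v₁ v₂ : E} (hv₁ : v₁ ∈ proxNC A a) (hv₂ : v₂ ∈ proxNC B b) (hsum : ‖v₁‖ + ‖v₂‖ = 1) :
    α ≤ ‖v₁ + v₂‖ := by
  obtain ⟨lam₁, hlam₁, hineq₁⟩ := proxNC_inner_le hv₁
  obtain ⟨lam₂, hlam₂, hineq₂⟩ := proxNC_inner_le hv₂
  have key : ∀ α' : ℝ, 0 < α' → α' < α → α' ≤ ‖v₁ + v₂‖ := by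
    intro α' hα'0 hα'α
    by_contra hcon
    push_neg at hcon
    -- choose t small
    obtain ⟨C, hC⟩ : ∃ C : ℝ, C = (lam₁ + lam₂) / 2 * (1 + 1 / α') ^ 2 := ⟨_, rfl⟩
    have hC0 : 0 ≤ C := by rw [hC]; positivity
    obtain ⟨ε, hε⟩ : ∃ ε : ℝ, ε = 1 - ‖v₁ + v₂‖ / α' := ⟨_, rfl⟩
    have hε0 : 0 < ε := by
      rw [hε]
      have : ‖v₁ + v₂‖ / α' < 1 := by rw [div_lt_one hα'0]; exact hcon
      linarith
    obtain ⟨t, ht⟩ : ∃ t : ℝ, t = min (α' * δ / 2) (ε / (C + 1)) := ⟨_, rfl⟩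
    have ht0 : 0 < t := by
      rw [ht]; exact lt_min (by positivity) (div_pos hε0 (by positivity))
    have ht1 : t < α' * δ := lt_of_le_of_lt (ht ▸ min_le_left _ _) (by linarith [mul_pos hα'0 hδ])
    have ht2 : t ≤ ε / (C + 1) := ht ▸ min_le_right _ _
    obtain ⟨ρ, hρ⟩ : ∃ ρ : ℝ, ρ = t / α' := ⟨_, rfl⟩
    have hρ0 : 0 < ρ := by rw [hρ]; positivity
    have hρδ : ρ < δ := by rw [hρ, div_lt_iff₀ hα'0]; nlinarith
    -- the translations
    obtain ⟨x₁, hx₁n, hx₁i⟩ : ∃ x₁ : E, ‖x₁‖ ≤ t ∧ ⟪v₁, x₁⟫ = t * ‖v₁‖ := by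
      rcases eq_or_ne v₁ 0 with h0 | h0
      · exact ⟨0, by simp [le_of_lt ht0], by simp [h0]⟩
      · refine ⟨(t / ‖v₁‖) • v₁, ?_, ?_⟩
        · rw [norm_smul, Real.norm_eq_abs, abs_of_pos (div_pos ht0 (norm_pos_iff.mpr h0)),
            div_mul_cancel₀ _ (norm_ne_zero_iff.mpr h0)]
        · rw [real_inner_smul_right, real_inner_self_eq_norm_sq]
          field_simp [norm_ne_zero_iff.mpr h0]
    obtain ⟨x₂, hx₂n, hx₂i⟩ : ∃ x₂ : E, ‖x₂‖ ≤ t ∧ ⟪v₂, x₂⟫ = t * ‖v₂‖ := by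
      rcases eq_or_ne v₂ 0 with h0 | h0
      · exact ⟨0, by simp [le_of_lt ht0], by simp [h0]⟩
      · refine ⟨(t / ‖v₂‖) • v₂, ?_, ?_⟩
        · rw [norm_smul, Real.norm_eq_abs, abs_of_pos (div_pos ht0 (norm_pos_iff.mpr h0)),
            div_mul_cancel₀ _ (norm_ne_zero_iff.mpr h0)]
        · rw [real_inner_smul_right, real_inner_self_eq_norm_sq]
          field_simp [norm_ne_zero_iff.mpr h0]
    have hxmax : max ‖x₁‖ ‖x₂‖ < α * ρ := by
      have : t < α * ρ := by
        rw [hρ, mul_div_assoc', lt_div_iff₀ hα'0]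
        nlinarith
      exact max_lt (lt_of_le_of_lt hx₁n this) (lt_of_le_of_lt hx₂n this)
    obtain ⟨u, hu⟩ := htrans ρ ⟨hρ0, hρδ⟩ a ⟨haA, haball⟩ b ⟨hbB, hbball⟩ x₁ x₂ hxmax
    obtain ⟨⟨⟨zA, hzA, hzAeq⟩, ⟨zC, hzC, hzCeq⟩⟩, huball⟩ := hu
    have huρ : ‖u‖ < ρ := by
      rw [Metric.mem_ball, dist_zero_right] at huball; exact huball
    have hzAa : zA - a = x₁ + u := by
      have : zA - a - x₁ = u := hzAeq
      rw [← this]; abel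
    have hzCb : zC - b = x₂ + u := by
      have : zC - b - x₂ = u := hzCeq
      rw [← this]; abel
    have hi₁ : ⟪v₁, x₁ + u⟫ ≤ lam₁ / 2 * ‖x₁ + u‖ ^ 2 := hzAa ▸ hineq₁ zA hzA
    have hi₂ : ⟪v₂, x₂ + u⟫ ≤ lam₂ / 2 * ‖x₂ + u‖ ^ 2 := hzCb ▸ hineq₂ zC hzC
    have hnb₁ : ‖x₁ + u‖ ≤ t + ρ := le_trans (norm_add_le _ _) (by linarith)
    have hnb₂ : ‖x₂ + u‖ ≤ t + ρ := le_trans (norm_add_le _ _) (by linarith)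
    have hinneru : -(‖v₁ + v₂‖ * ρ) ≤ ⟪v₁ + v₂, u⟫ := by
      have h1 := abs_real_inner_le_norm (v₁ + v₂) u
      have h2 := abs_le.mp h1
      have h3 : ‖v₁ + v₂‖ * ‖u‖ ≤ ‖v₁ + v₂‖ * ρ :=
        mul_le_mul_of_nonneg_left (le_of_lt huρ) (norm_nonneg _)
      linarith [h2.1]
    have hsplit : ⟪v₁, x₁ + u⟫ + ⟪v₂, x₂ + u⟫ = t + ⟪v₁ + v₂, u⟫ := by
      rw [inner_add_right, inner_add_right, inner_add_left, hx₁i, hx₂i]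
      have : t * ‖v₁‖ + t * ‖v₂‖ = t := by rw [← mul_add, hsum, mul_one]
      linarith [this]
    have hq₁ : lam₁ / 2 * ‖x₁ + u‖ ^ 2 ≤ lam₁ / 2 * (t + ρ) ^ 2 := by
      apply mul_le_mul_of_nonneg_left _ (by linarith)
      exact pow_le_pow_left₀ (norm_nonneg _) hnb₁ 2
    have hq₂ : lam₂ / 2 * ‖x₂ + u‖ ^ 2 ≤ lam₂ / 2 * (t + ρ) ^ 2 := by
      apply mul_le_mul_of_nonneg_left _ (by linarith)
      exact pow_le_pow_left₀ (norm_nonneg _) hnb₂ 2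
    -- combine
    have hmain : t - ‖v₁ + v₂‖ * ρ ≤ (lam₁ + lam₂) / 2 * (t + ρ) ^ 2 := by
      linarith [hi₁, hi₂, hsplit, hq₁, hq₂, hinneru]
    have htρ : t + ρ = t * (1 + 1 / α') := by rw [hρ]; field_simp
    have hrhs : (lam₁ + lam₂) / 2 * (t + ρ) ^ 2 = C * t ^ 2 := by
      rw [htρ, hC]; ring
    have hdiv : 1 - ‖v₁ + v₂‖ / α' ≤ C * t := by
      rw [hrhs] at hmain
      rw [hρ] at hmain
      have h4 : t * (1 - ‖v₁ + v₂‖ / α') ≤ t * (C * t) := by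
        calc t * (1 - ‖v₁ + v₂‖ / α') = t - ‖v₁ + v₂‖ * (t / α') := by field_simp
          _ ≤ C * t ^ 2 := hmain
          _ = t * (C * t) := by ring
      exact le_of_mul_le_mul_left h4 ht0
    have h5 : C * t < ε := by
      have h6 : t * (C + 1) ≤ ε := by
        rw [← div_mul_cancel₀ ε (by positivity : C + 1 ≠ 0)]
        exact mul_le_mul_of_nonneg_right ht2 (by positivity)
      nlinarith
    rw [hε] at h5
    linarith
  rcases le_or_gt α ‖v₁ + v₂‖ with h | h
  · exact h
  · obtain ⟨α', hα'1, hα'2⟩ := exists_between h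
    have h0 : 0 < α' := lt_of_le_of_lt (norm_nonneg _) hα'1
    linarith [key α' h0 hα'2]

lemma trans_implies_dual (A B : Set E) (xb : E) (α δ : ℝ) (hα : 0 < α) (hδ : 0 < δ)
    (htrans : TransversalWith A B xb α δ) :
    ∀ v₁ ∈ limNC A xb, ∀ v₂ ∈ limNC B xb, ‖v₁‖ + ‖v₂‖ = 1 → α ≤ ‖v₁ + v₂‖ := by
  rintro v₁ ⟨x, w, hxA, hwp, hxt, hwt⟩ v₂ ⟨y, w', hyB, hwp', hyt, hwt'⟩ hsum
  have hst : Tendsto (fun k => ‖w k‖ + ‖w' k‖) atTop (nhds 1) := by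
    have := hwt.norm.add hwt'.norm
    rwa [hsum] at this
  have hev1 : ∀ᶠ k in atTop, x k ∈ Metric.ball xb δ :=
    hxt.eventually_mem (Metric.ball_mem_nhds xb hδ)
  have hev2 : ∀ᶠ k in atTop, y k ∈ Metric.ball xb δ :=
    hyt.eventually_mem (Metric.ball_mem_nhds xb hδ)
  have hev3 : ∀ᶠ k in atTop, 0 < ‖w k‖ + ‖w' k‖ :=
    hst.eventually (eventually_gt_nhds (by norm_num : (0:ℝ) < 1))
  have hkey : ∀ᶠ k in atTop, α ≤ ‖w k + w' k‖ / (‖w k‖ + ‖w' k‖) := by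
    filter_upwards [hev1, hev2, hev3] with k h1 h2 h3
    obtain ⟨s, hs⟩ : ∃ s : ℝ, s = ‖w k‖ + ‖w' k‖ := ⟨_, rfl⟩
    have hs0 : 0 < s := hs ▸ h3
    have hsinv : 0 ≤ s⁻¹ := le_of_lt (inv_pos.mpr hs0)
    have hv₁' : s⁻¹ • w k ∈ proxNC A (x k) := smul_mem_proxNC (hwp k) hsinv
    have hv₂' : s⁻¹ • w' k ∈ proxNC B (y k) := smul_mem_proxNC (hwp' k) hsinv
    have hsum' : ‖s⁻¹ • w k‖ + ‖s⁻¹ • w' k‖ = 1 := by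
      rw [norm_smul, norm_smul, Real.norm_eq_abs, abs_of_nonneg hsinv, ← mul_add, ← hs,
        inv_mul_cancel₀ (ne_of_gt hs0)]
    have := trans_implies_dual_prox A B xb α δ hα hδ htrans (hxA k) h1 (hyB k) h2
      hv₁' hv₂' hsum'
    have heq : ‖s⁻¹ • w k + s⁻¹ • w' k‖ = ‖w k + w' k‖ / s := by
      rw [← smul_add, norm_smul, Real.norm_eq_abs, abs_of_nonneg hsinv, inv_mul_eq_div]
    rw [heq, hs] at this
    exact this
  have hlim : Tendsto (fun k => ‖w k + w' k‖ / (‖w k‖ + ‖w' k‖)) atTop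
      (nhds (‖v₁ + v₂‖ / 1)) := ((hwt.add hwt').norm).div hst one_ne_zero
  rw [div_one] at hlim
  exact ge_of_tendsto hlim hkey

lemma nontrivial_limNC (A : Set E) (hA : IsClosed A) (xb : E) (hxb : xb ∈ A)
    (hni : xb ∉ interior A) : ∃ v ∈ limNC A xb, ‖v‖ = 1 := by
  have hx : ∀ k : ℕ, ∃ x, x ∈ Metric.ball xb (1 / ((k:ℝ) + 1)) ∧ x ∉ A := by
    intro k
    by_contra h
    push_neg at h
    exact hni (mem_interior.mpr ⟨Metric.ball xb (1 / ((k:ℝ) + 1)), fun z hz => h z hz,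
      Metric.isOpen_ball, Metric.mem_ball_self (by positivity)⟩)
  choose x hxball hxA using hx
  have hproj : ∀ k : ℕ, ∃ y, y ∈ A ∧ infDist (x k) A = dist (x k) y := fun k =>
    have := hA.exists_infDist_eq_dist ⟨xb, hxb⟩ (x k)
    by obtain ⟨y, hy1, hy2⟩ := this; exact ⟨y, hy1, hy2⟩
  choose y hyA hyd using hproj
  have hdpos : ∀ k, 0 < dist (x k) (y k) := by
    intro k
    rcases eq_or_lt_of_le (dist_nonneg (x := x k) (y := y k)) with h | h
    · exfalso
      apply hxA k
      have hxy : x k = y k := dist_eq_zero.mp h.symm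
      rw [hxy]
      exact hyA k
    · exact h
  obtain ⟨v, hv⟩ : ∃ v : ℕ → E, v = fun k => (dist (x k) (y k))⁻¹ • (x k - y k) := ⟨_, rfl⟩
  have hvn : ∀ k, ‖v k‖ = 1 := by
    intro k
    rw [hv]
    simp only
    rw [norm_smul, Real.norm_eq_abs, abs_of_pos (inv_pos.mpr (hdpos k)), ← dist_eq_norm,
      inv_mul_cancel₀ (ne_of_gt (hdpos k))]
  have hvp : ∀ k, v k ∈ proxNC A (y k) := by
    intro k
    refine ⟨(dist (x k) (y k))⁻¹, le_of_lt (inv_pos.mpr (hdpos k)), x k,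
      ⟨hyA k, by rw [hyd k, dist_eq_norm]⟩, by rw [hv]⟩
  have hyb : ∀ k : ℕ, dist (y k) xb ≤ 2 * (1 / ((k:ℝ) + 1)) := by
    intro k
    have h1 : dist (x k) xb < 1 / ((k:ℝ) + 1) := by
      have := hxball k; rwa [Metric.mem_ball] at this
    have h2 : dist (x k) (y k) ≤ dist (x k) xb := by
      rw [← hyd k]; exact Metric.infDist_le_dist_of_mem hxb
    calc dist (y k) xb ≤ dist (y k) (x k) + dist (x k) xb := dist_triangle _ _ _
      _ = dist (x k) (y k) + dist (x k) xb := by rw [dist_comm]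
      _ ≤ 2 * (1 / ((k:ℝ) + 1)) := by linarith
  have hyt : Tendsto y atTop (nhds xb) := by
    rw [tendsto_iff_dist_tendsto_zero]
    apply squeeze_zero (fun k => dist_nonneg) hyb
    have := (tendsto_one_div_add_atTop_nhds_zero_nat : Tendsto (fun n : ℕ => 1 / ((n : ℝ) + 1)) atTop (nhds 0))
    have h4 := this.const_mul (2:ℝ)
    simpa using h4
  have hvball : ∀ k, v k ∈ Metric.closedBall (0:E) 1 := by
    intro k
    rw [Metric.mem_closedBall, dist_zero_right, hvn k]
  obtain ⟨vl, _, φ, hφ, hφt⟩ := (isCompact_closedBall (0:E) 1).tendsto_subseq hvball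
  refine ⟨vl, ⟨y ∘ φ, v ∘ φ, fun k => hyA (φ k), fun k => hvp (φ k), ?_, hφt⟩, ?_⟩
  · rw [tendsto_iff_dist_tendsto_zero]
    apply squeeze_zero (fun k => dist_nonneg) (g := fun k : ℕ => 2 * (1 / ((k:ℝ) + 1)))
    · intro k
      calc dist ((y ∘ φ) k) xb ≤ 2 * (1 / ((φ k : ℝ) + 1)) := hyb (φ k)
        _ ≤ 2 * (1 / ((k:ℝ) + 1)) := by
            have h := hφ.le_apply (x := k)
            have h2 : (k:ℝ) ≤ (φ k : ℝ) := by exact_mod_cast h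
            have h3 : (0:ℝ) < (k:ℝ) + 1 := by positivity
            have := one_div_le_one_div_of_le h3 (by linarith : (k:ℝ) + 1 ≤ (φ k : ℝ) + 1)
            linarith
    · have := (tendsto_one_div_add_atTop_nhds_zero_nat : Tendsto (fun n : ℕ => 1 / ((n : ℝ) + 1)) atTop (nhds 0))
      have h4 := this.const_mul (2:ℝ)
      simpa using h4
  · have h1 : Tendsto (fun k => ‖(v ∘ φ) k‖) atTop (nhds ‖vl‖) := hφt.norm
    have h2 : (fun k => ‖(v ∘ φ) k‖) = fun _ => (1:ℝ) := funext fun k => hvn (φ k)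
    rw [h2] at h1
    exact tendsto_nhds_unique h1 tendsto_const_nhds

lemma interior_transversal (A B : Set E) (xb : E) (hAi : xb ∈ interior A)
    (hBi : xb ∈ interior B) (α : ℝ) (hα : 0 < α) : ∃ δ > (0:ℝ), TransversalWith A B xb α δ := by
  obtain ⟨rA, hrA0, hrA⟩ := Metric.isOpen_iff.mp isOpen_interior xb hAi
  obtain ⟨rB, hrB0, hrB⟩ := Metric.isOpen_iff.mp isOpen_interior xb hBi
  obtain ⟨r, hr⟩ : ∃ r : ℝ, r = min rA rB := ⟨_, rfl⟩
  have hr0 : 0 < r := hr ▸ lt_min hrA0 hrB0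
  refine ⟨r / (2 * (α + 1)), by positivity, ?_⟩
  intro ρ hρ a ha b hb x₁ x₂ hx
  refine ⟨0, ⟨⟨a + x₁, ?_, by abel_nf⟩, ⟨b + x₂, ?_, by abel_nf⟩⟩,
    Metric.mem_ball_self hρ.1⟩
  · apply interior_subset
    apply hrA
    rw [Metric.mem_ball, dist_eq_norm]
    have h1 : ‖a - xb‖ < r / (2 * (α + 1)) := by
      rw [← dist_eq_norm]; exact ha.2
    have h2 : ‖x₁‖ < α * ρ := lt_of_le_of_lt (le_max_left _ _) hx
    have h3 : ρ < r / (2 * (α + 1)) := hρ.2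
    have h4 : α * ρ < α * (r / (2 * (α + 1))) := by
      exact mul_lt_mul_of_pos_left h3 hα
    have h5 : r / (2 * (α + 1)) + α * (r / (2 * (α + 1))) ≤ r / 2 := by
      have hα1 : (α:ℝ) + 1 ≠ 0 := by positivity
      have : r / (2 * (α + 1)) + α * (r / (2 * (α + 1))) = r / 2 := by field_simp; ring
      linarith
    have hrle : r ≤ rA := hr ▸ min_le_left _ _
    calc ‖a + x₁ - xb‖ ≤ ‖a - xb‖ + ‖x₁‖ := by
          have : a + x₁ - xb = (a - xb) + x₁ := by abel
          rw [this]; exact norm_add_le _ _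
      _ < r / (2 * (α + 1)) + α * (r / (2 * (α + 1))) := by linarith
      _ ≤ r / 2 := h5
      _ < rA := by linarith
  · apply interior_subset
    apply hrB
    rw [Metric.mem_ball, dist_eq_norm]
    have h1 : ‖b - xb‖ < r / (2 * (α + 1)) := by
      rw [← dist_eq_norm]; exact hb.2
    have h2 : ‖x₂‖ < α * ρ := lt_of_le_of_lt (le_max_right _ _) hx
    have h3 : ρ < r / (2 * (α + 1)) := hρ.2
    have h4 : α * ρ < α * (r / (2 * (α + 1))) := by
      exact mul_lt_mul_of_pos_left h3 hα
    have h5 : r / (2 * (α + 1)) + α * (r / (2 * (α + 1))) ≤ r / 2 := by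
      have hα1 : (α:ℝ) + 1 ≠ 0 := by positivity
      have : r / (2 * (α + 1)) + α * (r / (2 * (α + 1))) = r / 2 := by field_simp; ring
      linarith
    have hrle : r ≤ rB := hr ▸ min_le_right _ _
    calc ‖b + x₂ - xb‖ ≤ ‖b - xb‖ + ‖x₂‖ := by
          have : b + x₂ - xb = (b - xb) + x₂ := by abel
          rw [this]; exact norm_add_le _ _
      _ < r / (2 * (α + 1)) + α * (r / (2 * (α + 1))) := by linarith
      _ ≤ r / 2 := h5
      _ < rB := by linarith

lemma bsup_eq_top_of_all {P : ℝ → Prop} (h : ∀ α : ℝ, 0 < α → P α) :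
    (⨆ α ∈ {α : ℝ | P α}, ENNReal.ofReal α) = ⊤ := by
  rw [iSup_eq_top]
  intro b hb
  refine ⟨b.toReal + 1, ?_⟩
  have hmem : (b.toReal + 1) ∈ {α : ℝ | P α} := h _ (by positivity)
  rw [iSup_pos hmem]
  exact (ENNReal.lt_ofReal_iff_toReal_lt (ne_top_of_lt hb)).mpr (by linarith)

theorem stmt11 (A B : Set E) (hA : IsClosed A) (hB : IsClosed B) (xb : E) (hxb : xb ∈ A ∩ B) :
    (Transversal A B xb ↔ ∃ α > (0 : ℝ), ∀ v₁ ∈ limNC A xb, ∀ v₂ ∈ limNC B xb,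
        ‖v₁‖ + ‖v₂‖ = 1 → α < ‖v₁ + v₂‖) ∧
    rgColl A B xb =
      ⨆ α ∈ {α : ℝ | 0 < α ∧ ∀ v₁ ∈ limNC A xb, ∀ v₂ ∈ limNC B xb,
        ‖v₁‖ + ‖v₂‖ = 1 → α < ‖v₁ + v₂‖}, ENNReal.ofReal α := by
  obtain ⟨hxbA, hxbB⟩ := hxb
  by_cases hpair : ∃ v₁ ∈ limNC A xb, ∃ v₂ ∈ limNC B xb, ‖v₁‖ + ‖v₂‖ = 1
  · obtain ⟨u₁, hu₁, u₂, hu₂, hus⟩ := hpair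
    have K2 : ∀ α : ℝ, 0 < α →
        (∀ v₁ ∈ limNC A xb, ∀ v₂ ∈ limNC B xb, ‖v₁‖ + ‖v₂‖ = 1 → α < ‖v₁ + v₂‖) →
        ∃ δ > (0:ℝ), TransversalWith A B xb α δ := by
      intro α hα0 hd
      have hα1 : α < 1 :=
        lt_of_lt_of_le (hd u₁ hu₁ u₂ hu₂ hus) (by rw [← hus]; exact norm_add_le _ _)
      exact dual_implies_trans A B hA hB xb hxbA hxbB α hα0 hα1 hd
    have K1 : ∀ α δ : ℝ, 0 < α → 0 < δ → TransversalWith A B xb α δ →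
        ∀ α' : ℝ, 0 < α' → α' < α →
        (∀ v₁ ∈ limNC A xb, ∀ v₂ ∈ limNC B xb, ‖v₁‖ + ‖v₂‖ = 1 → α' < ‖v₁ + v₂‖) := by
      intro α δ hα hδ htr α' hα'0 hα'α v₁ h1 v₂ h2 hs
      exact lt_of_lt_of_le hα'α (trans_implies_dual A B xb α δ hα hδ htr v₁ h1 v₂ h2 hs)
    constructor
    · constructor
      · rintro ⟨α, hα0, δ, hδ0, htr⟩
        exact ⟨α / 2, by linarith, K1 α δ hα0 hδ0 htr (α / 2) (by linarith) (by linarith)⟩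
      · rintro ⟨α, hα0, hd⟩
        obtain ⟨δ, hδ0, htr⟩ := K2 α hα0 hd
        exact ⟨α, hα0, δ, hδ0, htr⟩
    · apply le_antisymm
      · apply iSup₂_le
        rintro α ⟨hα0, δ, hδ0, htr⟩
        by_contra hcon
        push_neg at hcon
        have hne : (⨆ α ∈ {α : ℝ | 0 < α ∧ ∀ v₁ ∈ limNC A xb, ∀ v₂ ∈ limNC B xb,
            ‖v₁‖ + ‖v₂‖ = 1 → α < ‖v₁ + v₂‖}, ENNReal.ofReal α) ≠ ⊤ := ne_top_of_lt hcon
        have hc : (⨆ α ∈ {α : ℝ | 0 < α ∧ ∀ v₁ ∈ limNC A xb, ∀ v₂ ∈ limNC B xb,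
            ‖v₁‖ + ‖v₂‖ = 1 → α < ‖v₁ + v₂‖}, ENNReal.ofReal α).toReal < α :=
          (ENNReal.lt_ofReal_iff_toReal_lt hne).mp hcon
        obtain ⟨α', h1, h2⟩ := exists_between hc
        have hα'0 : 0 < α' := lt_of_le_of_lt ENNReal.toReal_nonneg h1
        have hmem : α' ∈ {α : ℝ | 0 < α ∧ ∀ v₁ ∈ limNC A xb, ∀ v₂ ∈ limNC B xb,
            ‖v₁‖ + ‖v₂‖ = 1 → α < ‖v₁ + v₂‖} := ⟨hα'0, K1 α δ hα0 hδ0 htr α' hα'0 h2⟩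
        have hle : ENNReal.ofReal α' ≤ ⨆ α ∈ {α : ℝ | 0 < α ∧ ∀ v₁ ∈ limNC A xb,
            ∀ v₂ ∈ limNC B xb, ‖v₁‖ + ‖v₂‖ = 1 → α < ‖v₁ + v₂‖}, ENNReal.ofReal α :=
          le_iSup₂ (f := fun (α : ℝ) (_ : _) => ENNReal.ofReal α) α' hmem
        have := ENNReal.toReal_mono hne hle
        rw [ENNReal.toReal_ofReal (le_of_lt hα'0)] at this
        linarith
      · apply iSup₂_le
        rintro α ⟨hα0, hd⟩
        obtain ⟨δ, hδ0, htr⟩ := K2 α hα0 hd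
        exact le_iSup₂ (f := fun (α : ℝ) (_ : _) => ENNReal.ofReal α) α ⟨hα0, δ, hδ0, htr⟩
  · have hAint : xb ∈ interior A := by
      by_contra h
      obtain ⟨v, hv, hvn⟩ := nontrivial_limNC A hA xb hxbA h
      exact hpair ⟨v, hv, 0, zero_mem_limNC hxbB, by rw [hvn, norm_zero]; ring⟩
    have hBint : xb ∈ interior B := by
      by_contra h
      obtain ⟨v, hv, hvn⟩ := nontrivial_limNC B hB xb hxbB h
      exact hpair ⟨0, zero_mem_limNC hxbA, v, hv, by rw [hvn, norm_zero]; ring⟩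
    have hvac : ∀ α : ℝ, ∀ v₁ ∈ limNC A xb, ∀ v₂ ∈ limNC B xb,
        ‖v₁‖ + ‖v₂‖ = 1 → α < ‖v₁ + v₂‖ := by
      intro α v₁ h1 v₂ h2 hs
      exact absurd ⟨v₁, h1, v₂, h2, hs⟩ hpair
    constructor
    · constructor
      · intro _
        exact ⟨1, one_pos, hvac 1⟩
      · intro _
        obtain ⟨δ, hδ0, htr⟩ := interior_transversal A B xb hAint hBint 1 one_pos
        exact ⟨1, one_pos, δ, hδ0, htr⟩
    · have h1 : rgColl A B xb = ⊤ := by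
        rw [rgColl]
        exact bsup_eq_top_of_all (fun α hα =>
          ⟨hα, interior_transversal A B xb hAint hBint α hα⟩)
      have h2 : (⨆ α ∈ {α : ℝ | 0 < α ∧ ∀ v₁ ∈ limNC A xb, ∀ v₂ ∈ limNC B xb,
          ‖v₁‖ + ‖v₂‖ = 1 → α < ‖v₁ + v₂‖}, ENNReal.ofReal α) = ⊤ :=
        bsup_eq_top_of_all (P := fun α => 0 < α ∧ ∀ v₁ ∈ limNC A xb, ∀ v₂ ∈ limNC B xb,
          ‖v₁‖ + ‖v₂‖ = 1 → α < ‖v₁ + v₂‖) (fun α hα => ⟨hα, hvac α⟩)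
      rw [h1, h2]

end Statements
end
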